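/- arXiv:1209.6421 — 4 statements merged into one kernel-verified Lean document; each statement's English description precedes it below -/
import Mathlib

section
/- (Ellentuck's theorem.) A set 𝒳 ⊆ ℕ^[∞] is Ramsey if and only if it has the Baire property with respect to the exponential topology on ℕ^[∞]; and 𝒳 is Ramsey null if and only if it is meager with respect to the exponential topology. -/
open Set

/-- `ℕ^[∞]`: the infinite subsets of `ℕ`. -/
def NInfty : Type := {A : Set ℕ // A.Infinite}

/-- `x ↾ n` : the set of the `n` smallest elements of `x`. -/
noncomputable def vrestrict (x : Set ℕ) (n : ℕ) : Finset ℕ :=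
  (Finset.range n).image (Nat.nth (· ∈ x))

/-- The Ellentuck neighborhood `[a,A] = {B ∈ ℕ^[∞] : a ⊏ B and B ⊆ A}`, where `a ⊏ B`
means that `a` is the set of the `|a|` smallest elements of `B`. -/
noncomputable def enbhd (a : Finset ℕ) (A : NInfty) : Set NInfty :=
  {B | vrestrict B.1 a.card = a ∧ B.1 ⊆ A.1}

/-- The exponential (Ellentuck) topology on `ℕ^[∞]`, generated by the sets `[a,A]`. -/
noncomputable def expTop : TopologicalSpace NInfty :=
  TopologicalSpace.generateFrom {s | ∃ a A, s = enbhd a A}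

/-- `𝒳 ⊆ ℕ^[∞]` is Ramsey: for every nonempty `[a,A]` there is `B ∈ [a,A]` with
`[a,B] ⊆ 𝒳` or `[a,B] ∩ 𝒳 = ∅`. -/
def EIsRamsey (X : Set NInfty) : Prop :=
  ∀ (a : Finset ℕ) (A : NInfty), (enbhd a A).Nonempty →
    ∃ B ∈ enbhd a A, enbhd a B ⊆ X ∨ enbhd a B ∩ X = ∅

/-- `𝒳 ⊆ ℕ^[∞]` is Ramsey null: for every nonempty `[a,A]` there is `B ∈ [a,A]` with
`[a,B] ∩ 𝒳 = ∅`. -/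
def EIsRamseyNull (X : Set NInfty) : Prop :=
  ∀ (a : Finset ℕ) (A : NInfty), (enbhd a A).Nonempty →
    ∃ B ∈ enbhd a A, enbhd a B ∩ X = ∅

/-- `𝒳` has the Baire property w.r.t. the exponential topology: it is the symmetric
difference of an open set and a meager set. -/
def EHasBaireProperty (X : Set NInfty) : Prop :=
  ∃ U M : Set NInfty, @IsOpen NInfty expTop U ∧ @IsMeagre NInfty expTop M ∧ X = symmDiff U M


/-- `a` is an initial segment of `B`. -/
def Seg (a : Finset ℕ) (B : Set ℕ) : Prop :=
  ↑a ⊆ B ∧ ∀ x ∈ B, x ∉ a → ∀ y ∈ a, y < x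

lemma card_vrestrict {B : Set ℕ} (hB : B.Infinite) (k : ℕ) : (vrestrict B k).card = k := by
  have hinj : Function.Injective (Nat.nth (· ∈ B)) :=
    (Nat.nth_strictMono (p := (· ∈ B)) hB).injective
  rw [vrestrict, Finset.card_image_of_injective _ hinj, Finset.card_range]

lemma seg_vrestrict {B : Set ℕ} (hB : B.Infinite) (k : ℕ) : Seg (vrestrict B k) B := by
  classical
  constructor
  · intro x hx
    simp only [vrestrict, Finset.coe_image, Finset.coe_range] at hx
    obtain ⟨i, -, rfl⟩ := hx
    exact Nat.nth_mem_of_infinite hB i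
  · intro x hx hnx y hy
    simp only [vrestrict, Finset.mem_image, Finset.mem_range] at hy hnx
    obtain ⟨i, hi, rfl⟩ := hy
    have hx' : Nat.nth (· ∈ B) (Nat.count (· ∈ B) x) = x := Nat.nth_count hx
    have : k ≤ Nat.count (· ∈ B) x := by
      by_contra h
      exact hnx ⟨_, Nat.lt_of_not_le h, hx'⟩
    calc Nat.nth (· ∈ B) i < Nat.nth (· ∈ B) (Nat.count (· ∈ B) x) :=
          Nat.nth_strictMono hB (lt_of_lt_of_le hi this)
      _ = x := hx'

lemma seg_subset_of_card_le {a c : Finset ℕ} {B : Set ℕ} (ha : Seg a B) (hc : Seg c B)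
    (h : a.card ≤ c.card) : a ⊆ c := by
  by_contra hsub
  obtain ⟨x, hxa, hxc⟩ : ∃ x ∈ a, x ∉ c := by
    by_contra h'; push_neg at h'; exact hsub h'
  have hca : c ⊆ a := by
    intro y hy
    by_contra hya
    have h1 : x < y := ha.2 y (hc.1 (Finset.mem_coe.2 hy)) hya x hxa
    have h2 : y < x := hc.2 x (ha.1 (Finset.mem_coe.2 hxa)) hxc y hy
    omega
  have : c = a := Finset.eq_of_subset_of_card_le hca h
  exact hxc (this ▸ hxa)

lemma seg_unique {a c : Finset ℕ} {B : Set ℕ} (ha : Seg a B) (hc : Seg c B)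
    (h : a.card = c.card) : a = c :=
  Finset.Subset.antisymm (seg_subset_of_card_le ha hc h.le)
    (seg_subset_of_card_le hc ha h.ge)

lemma mem_enbhd {a : Finset ℕ} {A B : NInfty} :
    B ∈ enbhd a A ↔ Seg a B.1 ∧ B.1 ⊆ A.1 := by
  constructor
  · rintro ⟨h1, h2⟩; exact ⟨h1 ▸ seg_vrestrict B.2 a.card, h2⟩
  · rintro ⟨h1, h2⟩
    exact ⟨seg_unique (seg_vrestrict B.2 a.card) h1 (by rw [card_vrestrict B.2]), h2⟩


/-- If `c₂` is a longer initial segment of `D` than `c₁`, then any set with initial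
segment `c₂` contained appropriately also has initial segment `c₁`. -/
lemma seg_of_seg {c₁ c₂ : Finset ℕ} {D E : Set ℕ} (h1 : Seg c₁ D) (h2 : Seg c₂ D)
    (hcard : c₁.card ≤ c₂.card) (hE : Seg c₂ E) : Seg c₁ E := by
  have hsub : c₁ ⊆ c₂ := seg_subset_of_card_le h1 h2 hcard
  constructor
  · exact fun x hx => hE.1 (Finset.coe_subset.2 hsub hx)
  · intro x hx hnx y hy
    by_cases hx2 : x ∈ c₂
    · exact h1.2 x (h2.1 (Finset.mem_coe.2 hx2)) hnx y hy
    · exact hE.2 x hx hx2 y (hsub hy)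

lemma infinite_above {A : Set ℕ} (hA : A.Infinite) (m : ℕ) : {y ∈ A | m < y}.Infinite := by
  have : A \ {y | y ≤ m} ⊆ {y ∈ A | m < y} := by
    intro y hy; exact ⟨hy.1, by simpa using hy.2⟩
  exact (hA.diff (Set.finite_le_nat m)).mono this

lemma infinite_above_finset {A : Set ℕ} (hA : A.Infinite) (b : Finset ℕ) :
    {y ∈ A | ∀ z ∈ b, z < y}.Infinite := by
  refine (infinite_above hA (b.sup id)).mono ?_
  rintro y ⟨hyA, hy⟩
  exact ⟨hyA, fun z hz => lt_of_le_of_lt (Finset.le_sup (f := id) hz) hy⟩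

/-- `[b, b ∪ A]` as a set of infinite sets. -/
def nb (b : Finset ℕ) (A : Set ℕ) : Set NInfty :=
  {B | ↑b ⊆ B.1 ∧ B.1 ⊆ ↑b ∪ A}

lemma nb_mono {b : Finset ℕ} {A A' : Set ℕ} (h : A' ⊆ A) : nb b A' ⊆ nb b A :=
  fun B hB => ⟨hB.1, hB.2.trans (Set.union_subset_union_right _ h)⟩

def above (b : Finset ℕ) (A : Set ℕ) : Prop := ∀ y ∈ A, ∀ z ∈ b, z < y

lemma seg_of_between {b : Finset ℕ} {A B : Set ℕ} (hab : above b A)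
    (h1 : ↑b ⊆ B) (h2 : B ⊆ ↑b ∪ A) : Seg b B := by
  refine ⟨h1, fun x hx hnx y hy => ?_⟩
  rcases h2 hx with hx' | hx'
  · exact absurd (Finset.mem_coe.1 hx') hnx
  · exact hab x hx' y hy

/-- When `A` lies above `b`, `nb b A` coincides with the Ellentuck neighborhood. -/
lemma enbhd_eq_nb {b : Finset ℕ} {A : Set ℕ} (hab : above b A) (hC : (↑b ∪ A : Set ℕ).Infinite) :
    enbhd b ⟨↑b ∪ A, hC⟩ = nb b A := by
  ext B
  refine mem_enbhd.trans ?_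
  constructor
  · rintro ⟨hs, hsub⟩; exact ⟨hs.1, hsub⟩
  · rintro ⟨h1, h2⟩; exact ⟨seg_of_between hab h1 h2, h2⟩

lemma nb_subset_enbhd {b : Finset ℕ} {D : NInfty} (hseg : Seg b D.1) :
    nb b (D.1 \ ↑b) ⊆ {B | Seg b B.1 ∧ B.1 ⊆ D.1} := by
  rintro B ⟨h1, h2⟩
  have hBD : B.1 ⊆ D.1 := by
    intro x hx
    rcases h2 hx with h | h
    · exact hseg.1 h
    · exact h.1
  refine ⟨⟨h1, fun x hx hnx y hy => ?_⟩, hBD⟩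
  exact hseg.2 x (hBD hx) hnx y hy

section Forcing

variable (U : Set NInfty)

def acc (b : Finset ℕ) (A : Set ℕ) : Prop := nb b A ⊆ U

def rej (b : Finset ℕ) (A : Set ℕ) : Prop :=
  ∀ A', A' ⊆ A → A'.Infinite → ¬ acc U b A'

variable {U}

lemma acc_mono {b : Finset ℕ} {A A' : Set ℕ} (h : acc U b A) (hs : A' ⊆ A) : acc U b A' :=
  (nb_mono hs).trans h

lemma rej_mono {b : Finset ℕ} {A A' : Set ℕ} (h : rej U b A) (hs : A' ⊆ A) : rej U b A' :=
  fun A'' hsub hinf => h A'' (hsub.trans hs) hinf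

end Forcing

/-- Shrink an infinite set to satisfy finitely many monotone reachable tasks. -/
lemma shrink_list {τ : Type} (Q : τ → Set ℕ → Prop)
    (mono : ∀ t A A', A' ⊆ A → Q t A → Q t A')
    (reach : ∀ t A, A.Infinite → ∃ A', A' ⊆ A ∧ A'.Infinite ∧ Q t A') :
    ∀ (l : List τ) (A : Set ℕ), A.Infinite → ∃ A', A' ⊆ A ∧ A'.Infinite ∧ ∀ t ∈ l, Q t A' := by
  intro l
  induction l with
  | nil => exact fun A hA => ⟨A, Set.Subset.rfl, hA, by simp⟩
  | cons t l ih =>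
    intro A hA
    obtain ⟨A', hsub, hinf, hall⟩ := ih A hA
    obtain ⟨A'', hsub', hinf', hQ⟩ := reach t A' hinf
    refine ⟨A'', hsub'.trans hsub, hinf', ?_⟩
    intro t' ht'
    rcases List.mem_cons.1 ht' with rfl | h
    · exact hQ
    · exact mono t' A' A'' hsub' (hall t' h)

/-- The generic fusion lemma. -/
theorem fusion {A₀ : Set ℕ} {Φ : Finset ℕ → Set ℕ → Prop}
    (base : ∃ A, A ⊆ A₀ ∧ A.Infinite ∧ Φ ∅ A)
    (step : ∀ f A, A ⊆ A₀ → A.Infinite → Φ f A →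
      ∃ x ∈ A, ∃ A', A' ⊆ A ∧ A'.Infinite ∧ (∀ y ∈ A', x < y) ∧ Φ (insert x f) A') :
    ∃ g : ℕ → ℕ, StrictMono g ∧ (∀ k, g k ∈ A₀) ∧
      ∀ k, ∃ A, A ⊆ A₀ ∧ A.Infinite ∧ (∀ j, k ≤ j → g j ∈ A) ∧
        Φ ((Finset.range k).image g) A := by
  classical
  -- states
  let St := {q : Finset ℕ × Set ℕ // q.2 ⊆ A₀ ∧ q.2.Infinite ∧ Φ q.1 q.2}
  have next : ∀ σ : St, ∃ x ∈ σ.1.2, ∃ A', A' ⊆ σ.1.2 ∧ A'.Infinite ∧ (∀ y ∈ A', x < y) ∧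
      Φ (insert x σ.1.1) A' := fun σ => step σ.1.1 σ.1.2 σ.2.1 σ.2.2.1 σ.2.2.2
  let nx : St → ℕ := fun σ => (next σ).choose
  let nA : St → Set ℕ := fun σ => (next σ).choose_spec.2.choose
  have hnx : ∀ σ : St, nx σ ∈ σ.1.2 := fun σ => (next σ).choose_spec.1
  have hnA : ∀ σ : St, nA σ ⊆ σ.1.2 ∧ (nA σ).Infinite ∧ (∀ y ∈ nA σ, nx σ < y) ∧
      Φ (insert (nx σ) σ.1.1) (nA σ) := fun σ => (next σ).choose_spec.2.choose_spec
  let nst : St → St := fun σ =>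
    ⟨(insert (nx σ) σ.1.1, nA σ), (hnA σ).1.trans σ.2.1, (hnA σ).2.1, (hnA σ).2.2.2⟩
  obtain ⟨Abase, hA0, hA0inf, hΦ0⟩ := base
  let σ₀ : St := ⟨(∅, Abase), hA0, hA0inf, hΦ0⟩
  let st : ℕ → St := fun k => Nat.rec σ₀ (fun _ σ => nst σ) k
  let g : ℕ → ℕ := fun k => nx (st k)
  have hst_succ : ∀ k, st (k+1) = nst (st k) := fun k => rfl
  have hA_succ : ∀ k, (st (k+1)).1.2 ⊆ (st k).1.2 := fun k => (hnA (st k)).1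
  have hgt : ∀ k, ∀ y ∈ (st (k+1)).1.2, g k < y := fun k => (hnA (st k)).2.2.1
  have hgmem : ∀ k, g k ∈ (st k).1.2 := fun k => hnx (st k)
  have hchain : ∀ k j, k ≤ j → (st j).1.2 ⊆ (st k).1.2 := by
    intro k j hkj
    induction j with
    | zero => cases Nat.le_zero.1 hkj; exact Set.Subset.rfl
    | succ j ih =>
      rcases Nat.lt_or_ge k (j+1) with h | h
      · exact (hA_succ j).trans (ih (Nat.lt_succ_iff.1 h))
      · have : k = j + 1 := le_antisymm hkj h
        subst this; exact Set.Subset.rfl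
  have hgmono : StrictMono g := by
    apply strictMono_nat_of_lt_succ
    intro k
    exact hgt k _ (hgmem (k+1))
  have hf : ∀ k, (st k).1.1 = (Finset.range k).image g := by
    intro k
    induction k with
    | zero => simp only [Finset.range_zero, Finset.image_empty]; rfl
    | succ k ih =>
      have : (st (k+1)).1.1 = insert (g k) (st k).1.1 := rfl
      rw [this, ih, Finset.range_add_one, Finset.image_insert]
  refine ⟨g, hgmono, fun k => (st k).2.1 (hgmem k), fun k => ?_⟩
  refine ⟨(st k).1.2, (st k).2.1, (st k).2.2.1, ?_, (hf k) ▸ (st k).2.2.2⟩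
  intro j hkj
  exact hchain k j hkj (hgmem j)

lemma stage_bound {g : ℕ → ℕ} (hg : StrictMono g) {s : Finset ℕ}
    (hs : ∀ y ∈ s, ∃ i, g i = y) :
    ∃ k, s ⊆ (Finset.range k).image g ∧ ∀ j, (∀ z ∈ s, z < g j) → k ≤ j := by
  rcases s.eq_empty_or_nonempty with rfl | hne
  · exact ⟨0, by simp, fun j _ => Nat.zero_le j⟩
  · obtain ⟨i, hi⟩ := hs (s.max' hne) (s.max'_mem hne)
    refine ⟨i + 1, ?_, ?_⟩
    · intro y hy
      obtain ⟨i', hi'⟩ := hs y hy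
      have : g i' ≤ g i := by rw [hi, hi']; exact s.le_max' y hy
      have : i' ≤ i := (StrictMono.le_iff_le hg).1 this
      exact Finset.mem_image.2 ⟨i', Finset.mem_range.2 (Nat.lt_succ_of_le this), hi'⟩
    · intro j hj
      have : g i < g j := hi ▸ hj (s.max' hne) (s.max'_mem hne)
      exact Nat.succ_le_of_lt (hg.lt_iff_lt.1 this)

lemma decide_reach (U : Set NInfty) (b : Finset ℕ) :
    ∀ A : Set ℕ, A.Infinite → ∃ A', A' ⊆ A ∧ A'.Infinite ∧ (acc U b A' ∨ rej U b A') := by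
  intro A hA
  by_cases h : ∃ A', A' ⊆ A ∧ A'.Infinite ∧ acc U b A'
  · obtain ⟨A', h1, h2, h3⟩ := h
    exact ⟨A', h1, h2, Or.inl h3⟩
  · push_neg at h
    exact ⟨A, Set.Subset.rfl, hA, Or.inr (fun A' hsub hinf hacc => h A' hsub hinf hacc)⟩

/-- The key combinatorial lemma (Galvin's lemma, relativized): for any "open-like" set `U`,
any `[a₀, A₀]` can be shrunk to decide `U`. -/
lemma galvin {U : Set NInfty} {a₀ : Finset ℕ} {A₀ : Set ℕ}
    (hopen : ∀ D : NInfty, D ∈ U →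
      ∃ c, Seg c D.1 ∧ ∀ B : NInfty, Seg c B.1 → B.1 ⊆ D.1 → B ∈ U)
    (hA₀ : A₀.Infinite) (hab : above a₀ A₀) :
    ∃ A', A' ⊆ A₀ ∧ A'.Infinite ∧ (nb a₀ A' ⊆ U ∨ nb a₀ A' ∩ U = ∅) := by
  classical
  -- Phase 1: decide all finite extensions of a₀
  obtain ⟨g, hgmono, hgmem, hgst⟩ := fusion
      (A₀ := A₀) (Φ := fun f A => ∀ s ∈ f.powerset, acc U (a₀ ∪ s) A ∨ rej U (a₀ ∪ s) A)
      (by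
        obtain ⟨A', h1, h2, h3⟩ := decide_reach U a₀ A₀ hA₀
        refine ⟨A', h1, h2, ?_⟩
        intro s hs
        rw [Finset.mem_powerset, Finset.subset_empty] at hs
        subst hs
        rw [Finset.union_empty]
        exact h3)
      (by
        intro f A hsub hinf hΦ
        obtain ⟨x, hx⟩ := hinf.nonempty
        have hA'' : {y ∈ A | x < y}.Infinite := infinite_above hinf x
        obtain ⟨A', h1, h2, h3⟩ := shrink_list (fun (s : Finset ℕ) A => acc U (a₀ ∪ s) A ∨ rej U (a₀ ∪ s) A)
          (by
            rintro t A A' hsub (h | h)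
            · exact Or.inl (acc_mono h hsub)
            · exact Or.inr (rej_mono h hsub))
          (fun t A hA => decide_reach U (a₀ ∪ t) A hA)
          (insert x f).powerset.toList {y ∈ A | x < y} hA''
        refine ⟨x, hx, A', h1.trans (fun y hy => hy.1), h2, fun y hy => (h1 hy).2, ?_⟩
        intro s hs
        exact h3 s (Finset.mem_toList.2 hs))
  set R : Set ℕ := Set.range g with hR
  have hRsub : R ⊆ A₀ := by rintro y ⟨k, rfl⟩; exact hgmem k
  have hRinf : R.Infinite := Set.infinite_range_of_injective hgmono.injective
  set Tl : Finset ℕ → Set ℕ := fun b => {y ∈ R | ∀ z ∈ b, z < y} with hTl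
  -- decidedness along R
  have Dec : ∀ s : Finset ℕ, ↑s ⊆ R →
      acc U (a₀ ∪ s) (Tl (a₀ ∪ s)) ∨ rej U (a₀ ∪ s) (Tl (a₀ ∪ s)) := by
    intro s hsR
    obtain ⟨k, hsk, hbound⟩ := stage_bound hgmono (fun y hy => hsR (Finset.mem_coe.2 hy))
    obtain ⟨A, hAsub, hAinf, htail, hΦ⟩ := hgst k
    have hts : Tl (a₀ ∪ s) ⊆ A := by
      rintro y ⟨⟨j, rfl⟩, hy⟩
      exact htail j (hbound j (fun z hz => hy z (Finset.mem_union_right _ hz)))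
    rcases hΦ s (Finset.mem_powerset.2 hsk) with h | h
    · exact Or.inl (acc_mono h hts)
    · exact Or.inr (rej_mono h hts)
  by_cases hrej : rej U a₀ R
  · -- Phase 2: fusion of rejecting sets
    obtain ⟨h, hhmono, hhmem, hhst⟩ := fusion
        (A₀ := R) (Φ := fun f A => ↑f ⊆ R ∧ (∀ y ∈ A, ∀ z ∈ a₀ ∪ f, z < y) ∧
          ∀ s ∈ f.powerset, rej U (a₀ ∪ s) A)
        (by
          refine ⟨R, Set.Subset.rfl, hRinf, by simp, ?_, ?_⟩
          · intro y hy z hz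
            rw [Finset.union_empty] at hz
            exact hab y (hRsub hy) z hz
          · intro s hs
            rw [Finset.mem_powerset, Finset.subset_empty] at hs
            subst hs
            rw [Finset.union_empty]
            exact hrej)
        (by
          intro f A hsubR hinf hΦ
          obtain ⟨hfR, habv, hrejs⟩ := hΦ
          set Bad : Finset ℕ → Set ℕ :=
            fun s => {x ∈ A | ¬ rej U (insert x (a₀ ∪ s)) (Tl (insert x (a₀ ∪ s)))} with hBad
          have hBadfin : ∀ s ∈ f.powerset, (Bad s).Finite := by
            intro s hs
            rw [Finset.mem_powerset] at hs
            by_contra hBinf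
            replace hBinf : (Bad s).Infinite := hBinf
            -- Bad s infinite would give an accepting subset of A
            have hacc : acc U (a₀ ∪ s) (Bad s) := by
              intro C hC
              have hCd : (C.1 \ ↑(a₀ ∪ s)).Nonempty := (C.2.diff (a₀ ∪ s).finite_toSet).nonempty
              set x := sInf (C.1 \ ↑(a₀ ∪ s)) with hxdef
              have hxmem : x ∈ C.1 \ ↑(a₀ ∪ s) := Nat.sInf_mem hCd
              have hxS : x ∈ Bad s := by
                rcases hC.2 hxmem.1 with h' | h'
                · exact absurd h' hxmem.2
                · exact h'
              have hxA : x ∈ A := hxS.1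
              have hdec := Dec (insert x s) (by
                intro y hy
                rcases Finset.mem_insert.1 (Finset.mem_coe.1 hy) with rfl | hy'
                · exact hsubR hxA
                · exact hfR (Finset.mem_coe.2 (hs hy')))
              rw [Finset.union_insert] at hdec
              have haccx : acc U (insert x (a₀ ∪ s)) (Tl (insert x (a₀ ∪ s))) := by
                rcases hdec with h' | h'
                · exact h'
                · exact absurd h' hxS.2
              apply haccx
              constructor
              · intro y hy
                rcases Finset.mem_insert.1 (Finset.mem_coe.1 hy) with rfl | hy'
                · exact hxmem.1
                · exact hC.1 (Finset.mem_coe.2 hy')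
              · intro y hyC
                by_cases hyb : y ∈ (insert x (a₀ ∪ s) : Finset ℕ)
                · exact Or.inl (Finset.mem_coe.2 hyb)
                · refine Or.inr ?_
                  have hynb : y ∉ (a₀ ∪ s : Finset ℕ) := fun h' =>
                    hyb (Finset.mem_insert_of_mem h')
                  have hyS : y ∈ Bad s := by
                    rcases hC.2 hyC with h' | h'
                    · exact absurd h' hynb
                    · exact h'
                  have hyA : y ∈ A := hyS.1
                  refine ⟨hsubR hyA, ?_⟩
                  intro z hz
                  rcases Finset.mem_insert.1 hz with rfl | hz'
                  · -- z = x : x < y since x = sInf and y ≠ x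
                    have hle : x ≤ y := Nat.sInf_le ⟨hyC, hynb⟩
                    have hne : y ≠ x := fun h' => hyb (by rw [h']; exact Finset.mem_insert_self x _)
                    omega
                  · exact habv y hyA z (by
                      rcases Finset.mem_union.1 hz' with h' | h'
                      · exact Finset.mem_union_left _ h'
                      · exact Finset.mem_union_right _ (hs h'))
            exact hrejs s (Finset.mem_powerset.2 hs) (Bad s) (fun y hy => hy.1) hBinf hacc
          have hBadU : (⋃ s ∈ (↑f.powerset : Set (Finset ℕ)), Bad s).Finite :=
            Set.Finite.biUnion f.powerset.finite_toSet (fun s hs => hBadfin s hs)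
          obtain ⟨x, hxA, hxB⟩ : ∃ x ∈ A, x ∉ ⋃ s ∈ (↑f.powerset : Set (Finset ℕ)), Bad s := by
            obtain ⟨x, hx⟩ := (hinf.diff hBadU).nonempty
            exact ⟨x, hx.1, hx.2⟩
          refine ⟨x, hxA, {y ∈ A | x < y}, fun y hy => hy.1, infinite_above hinf x,
            fun y hy => hy.2, ?_, ?_, ?_⟩
          · intro y hy
            rcases Finset.mem_insert.1 (Finset.mem_coe.1 hy) with rfl | hy'
            · exact hsubR hxA
            · exact hfR (Finset.mem_coe.2 hy')
          · intro y hy z hz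
            rcases Finset.mem_union.1 hz with h' | h'
            · exact habv y hy.1 z (Finset.mem_union_left _ h')
            · rcases Finset.mem_insert.1 h' with rfl | h''
              · exact hy.2
              · exact habv y hy.1 z (Finset.mem_union_right _ h'')
          · intro s' hs'
            rw [Finset.mem_powerset] at hs'
            by_cases hxs : x ∈ s'
            · -- s' = insert x (s'.erase x)
              have hse : s'.erase x ⊆ f := by
                intro z hz
                rcases Finset.mem_insert.1 (hs' (Finset.mem_of_mem_erase hz)) with h' | h'
                · exact absurd h' (Finset.ne_of_mem_erase hz)
                · exact h'
              have hnotbad : x ∉ Bad (s'.erase x) := by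
                intro h'
                exact hxB (Set.mem_biUnion (Finset.mem_coe.2 (Finset.mem_powerset.2 hse)) h')
              have hrx : rej U (insert x (a₀ ∪ s'.erase x)) (Tl (insert x (a₀ ∪ s'.erase x))) := by
                by_contra h'
                exact hnotbad ⟨hxA, h'⟩
              have heq : insert x (a₀ ∪ s'.erase x) = a₀ ∪ s' := by
                rw [← Finset.union_insert, Finset.insert_erase hxs]
              rw [heq] at hrx
              refine rej_mono hrx ?_
              intro y hy
              refine ⟨hsubR hy.1, ?_⟩
              intro z hz
              rcases Finset.mem_union.1 hz with h' | h'
              · exact habv y hy.1 z (Finset.mem_union_left _ h')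
              · rcases Finset.mem_insert.1 (hs' h') with rfl | h''
                · exact hy.2
                · exact habv y hy.1 z (Finset.mem_union_right _ h'')
            · have hsf : s' ⊆ f := fun z hz => by
                rcases Finset.mem_insert.1 (hs' hz) with rfl | h'
                · exact absurd hz hxs
                · exact h'
              exact rej_mono (hrejs s' (Finset.mem_powerset.2 hsf)) (fun y hy => hy.1))
    -- Phase 3: the fused set rejects U everywhere, so by openness it misses U
    set C' : Set ℕ := Set.range h with hC'
    have hC'R : C' ⊆ R := by rintro y ⟨k, rfl⟩; exact hhmem k
    have hC'inf : C'.Infinite := Set.infinite_range_of_injective hhmono.injective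
    refine ⟨C', hC'R.trans hRsub, hC'inf, Or.inr ?_⟩
    rw [Set.eq_empty_iff_forall_notMem]
    rintro D ⟨hDnb, hDU⟩
    obtain ⟨c, hcseg, hcsub⟩ := hopen D hDU
    have habC' : above a₀ C' := fun y hy z hz => hab y (hRsub (hC'R hy)) z hz
    have hsega₀ : Seg a₀ D.1 := seg_of_between habC' hDnb.1 hDnb.2
    obtain ⟨b, hba₀, hsegb, hU'⟩ : ∃ b : Finset ℕ, a₀ ⊆ b ∧ Seg b D.1 ∧
        ∀ B : NInfty, Seg b B.1 → B.1 ⊆ D.1 → B ∈ U := by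
      rcases le_total c.card a₀.card with hcard | hcard
      · exact ⟨a₀, Finset.Subset.refl _, hsega₀,
          fun B hB hBD => hcsub B (seg_of_seg hcseg hsega₀ hcard hB) hBD⟩
      · exact ⟨c, seg_subset_of_card_le hsega₀ hcseg hcard, hcseg, hcsub⟩
    have haccb : acc U b (D.1 \ ↑b) := by
      intro B hB
      obtain ⟨h1, h2⟩ := nb_subset_enbhd hsegb hB
      exact hU' B h1 h2
    set s : Finset ℕ := b \ a₀ with hs
    have hsC' : ∀ y ∈ s, ∃ i, h i = y := by
      intro y hy
      have hyb : y ∈ b := (Finset.mem_sdiff.1 hy).1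
      have hyD : y ∈ D.1 := hsegb.1 (Finset.mem_coe.2 hyb)
      rcases hDnb.2 hyD with h' | h'
      · exact absurd (Finset.mem_coe.1 h')
          (fun hm => (Finset.mem_sdiff.1 hy).2 hm)
      · exact h'
    obtain ⟨k, hsk, hbound⟩ := stage_bound hhmono hsC'
    obtain ⟨A, hAsub, hAinf, htail, hΦ⟩ := hhst k
    obtain ⟨-, -, hrejs'⟩ := hΦ
    have hrejb : rej U (a₀ ∪ s) A := hrejs' s (Finset.mem_powerset.2 hsk)
    have hbeq : a₀ ∪ s = b := Finset.union_sdiff_of_subset hba₀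
    rw [hbeq] at hrejb
    have hsubA : D.1 \ ↑b ⊆ A := by
      rintro y ⟨hyD, hyb⟩
      have hygt : ∀ z ∈ b, z < y :=
        hsegb.2 y hyD (fun h' => hyb (Finset.mem_coe.2 h'))
      have hyC' : y ∈ C' := by
        rcases hDnb.2 hyD with h' | h'
        · exact absurd h'
            (fun hm => hyb (Finset.mem_coe.2 (hba₀ (Finset.mem_coe.1 hm))))
        · exact h'
      obtain ⟨j, rfl⟩ := hyC'
      exact htail j (hbound j (fun z hz => hygt z ((Finset.mem_sdiff.1 hz).1)))
    exact hrejb (D.1 \ ↑b) hsubA (D.2.diff b.finite_toSet) haccb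
  · -- not rejected: an accepting subset exists
    unfold rej at hrej
    push_neg at hrej
    obtain ⟨A', h1, h2, h3⟩ := hrej
    exact ⟨A', h1.trans hRsub, h2, Or.inl h3⟩

noncomputable instance : TopologicalSpace NInfty := expTop

lemma isOpen_enbhd (a : Finset ℕ) (A : NInfty) : IsOpen (enbhd a A) :=
  TopologicalSpace.GenerateOpen.basic _ ⟨a, A, rfl⟩

/-- Ellentuck neighborhoods form a neighborhood basis: every open set contains a
basic neighborhood `[c, D]` around each of its points. -/
lemma open_mem {U : Set NInfty} (hU : IsOpen U) {D : NInfty} (hD : D ∈ U) :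
    ∃ c, Seg c D.1 ∧ ∀ B : NInfty, Seg c B.1 → B.1 ⊆ D.1 → B ∈ U := by
  have hU' : TopologicalSpace.GenerateOpen {s | ∃ a A, s = enbhd a A} U := hU
  clear hU
  induction hU' with
  | basic s hs =>
    obtain ⟨a, A, rfl⟩ := hs
    obtain ⟨hseg, hsub⟩ := mem_enbhd.1 hD
    exact ⟨a, hseg, fun B hB hBD => mem_enbhd.2 ⟨hB, hBD.trans hsub⟩⟩
  | univ =>
    refine ⟨∅, ⟨by simp, ?_⟩, fun B _ _ => trivial⟩
    intro x _ _ y hy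
    simp at hy
  | inter s t hs ht ihs iht =>
    obtain ⟨c₁, hc₁, hs₁⟩ := ihs hD.1
    obtain ⟨c₂, hc₂, hs₂⟩ := iht hD.2
    rcases le_total c₁.card c₂.card with hcard | hcard
    · exact ⟨c₂, hc₂, fun B hB hBD =>
        ⟨hs₁ B (seg_of_seg hc₁ hc₂ hcard hB) hBD, hs₂ B hB hBD⟩⟩
    · exact ⟨c₁, hc₁, fun B hB hBD =>
        ⟨hs₁ B hB hBD, hs₂ B (seg_of_seg hc₂ hc₁ hcard hB) hBD⟩⟩
  | sUnion S hS ih =>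
    obtain ⟨t, htS, hDt⟩ := hD
    obtain ⟨c, hc, hsub⟩ := ih t htS hDt
    exact ⟨c, hc, fun B hB hBD => ⟨t, htS, hsub B hB hBD⟩⟩

/-- Open sets are completely Ramsey. -/
lemma isOpen_completelyRamsey {U : Set NInfty} (hU : IsOpen U) :
    ∀ (a : Finset ℕ) (A : NInfty), (enbhd a A).Nonempty →
      ∃ B ∈ enbhd a A, enbhd a B ⊆ U ∨ enbhd a B ∩ U = ∅ := by
  intro a A hne
  obtain ⟨E, hE⟩ := hne
  obtain ⟨hEseg, hEsub⟩ := mem_enbhd.1 hE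
  have haA : ↑a ⊆ A.1 := fun x hx => hEsub (hEseg.1 hx)
  have hA'inf : {y ∈ A.1 | ∀ z ∈ a, z < y}.Infinite := infinite_above_finset A.2 a
  have hab : above a {y ∈ A.1 | ∀ z ∈ a, z < y} := fun y hy z hz => hy.2 z hz
  obtain ⟨A'', h1, h2, h3⟩ := galvin (fun D hD => open_mem hU hD) hA'inf hab
  have hab'' : above a A'' := fun y hy z hz => (h1 hy).2 z hz
  have hBinf : (↑a ∪ A'' : Set ℕ).Infinite := h2.mono Set.subset_union_right
  refine ⟨⟨↑a ∪ A'', hBinf⟩, ?_, ?_⟩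
  · refine mem_enbhd.2 ⟨seg_of_between hab'' Set.subset_union_left Set.Subset.rfl, ?_⟩
    exact Set.union_subset haA (fun y hy => (h1 hy).1)
  · rwa [enbhd_eq_nb hab'' hBinf]

/-- Nowhere dense sets can be avoided on a subneighborhood. -/
lemma nwd_shrink {X : Set NInfty} (hX : IsNowhereDense X) :
    ∀ (b : Finset ℕ) (A : Set ℕ), A.Infinite → above b A →
      ∃ A', A' ⊆ A ∧ A'.Infinite ∧ nb b A' ∩ X = ∅ := by
  intro b A hA hab
  have hV : IsOpen (closure X)ᶜ := isOpen_compl_iff.2 isClosed_closure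
  obtain ⟨A', h1, h2, h3⟩ := galvin (fun D hD => open_mem hV hD) hA hab
  rcases h3 with h3 | h3
  · refine ⟨A', h1, h2, Set.eq_empty_iff_forall_notMem.2 ?_⟩
    rintro D ⟨hD1, hD2⟩
    exact (h3 hD1) (subset_closure hD2)
  · exfalso
    have hab' : above b A' := fun y hy z hz => hab y (h1 hy) z hz
    have hBinf : (↑b ∪ A' : Set ℕ).Infinite := h2.mono Set.subset_union_right
    have hcl : nb b A' ⊆ closure X := by
      intro D hD
      by_contra hDc
      exact Set.eq_empty_iff_forall_notMem.1 h3 D ⟨hD, hDc⟩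
    have hop : enbhd b ⟨↑b ∪ A', hBinf⟩ ⊆ interior (closure X) :=
      (isOpen_enbhd b ⟨↑b ∪ A', hBinf⟩).subset_interior_iff.2
        (by rw [enbhd_eq_nb hab' hBinf]; exact hcl)
    have hE : (⟨↑b ∪ A', hBinf⟩ : NInfty) ∈ enbhd b ⟨↑b ∪ A', hBinf⟩ := by
      rw [enbhd_eq_nb hab' hBinf]
      exact ⟨Set.subset_union_left, Set.Subset.rfl⟩
    have := hop hE
    rw [hX] at this
    exact this

/-- Meager sets are Ramsey null. -/
lemma isMeagre_ramseyNull {X : Set NInfty} (hX : IsMeagre X) : EIsRamseyNull X := by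
  classical
  obtain ⟨S, hnwd, hcnt, hcov⟩ := isMeagre_iff_countable_union_isNowhereDense.1 hX
  intro a A hne
  obtain ⟨E, hE⟩ := hne
  obtain ⟨hEseg, hEsub⟩ := mem_enbhd.1 hE
  have haA : ↑a ⊆ A.1 := fun x hx => hEsub (hEseg.1 hx)
  rcases S.eq_empty_or_nonempty with rfl | hSne
  · refine ⟨E, hE, Set.eq_empty_iff_forall_notMem.2 ?_⟩
    rintro D ⟨-, hD2⟩
    simpa using hcov hD2
  obtain ⟨Xe, hXe⟩ := hcnt.exists_eq_range hSne
  have hXenwd : ∀ n, IsNowhereDense (Xe n) := fun n => hnwd (Xe n) (hXe ▸ ⟨n, rfl⟩)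
  have hcov' : X ⊆ ⋃ n, Xe n := by rwa [hXe, Set.sUnion_range] at hcov
  set A' : Set ℕ := {y ∈ A.1 | ∀ z ∈ a, z < y} with hA'
  have hA'inf : A'.Infinite := infinite_above_finset A.2 a
  -- the shrinking tasks
  set Q : Finset ℕ × ℕ → Set ℕ → Prop := fun t B => nb (a ∪ t.1) B ∩ Xe t.2 = ∅ with hQ
  have hQmono : ∀ t B B', B' ⊆ B → Q t B → Q t B' := by
    intro t B B' hsub hQt
    show nb (a ∪ t.1) B' ∩ Xe t.2 = ∅
    rw [Set.eq_empty_iff_forall_notMem]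
    rintro D ⟨hD1, hD2⟩
    exact Set.eq_empty_iff_forall_notMem.1 hQt D ⟨nb_mono hsub hD1, hD2⟩
  have hQreach : ∀ t (B : Set ℕ), B.Infinite → ∃ B', B' ⊆ B ∧ B'.Infinite ∧ Q t B' := by
    rintro ⟨s, n⟩ B hB
    have hf : {y ∈ B | ∀ z ∈ a ∪ s, z < y}.Infinite := infinite_above_finset hB (a ∪ s)
    obtain ⟨B', h1, h2, h3⟩ := nwd_shrink (hXenwd n) (a ∪ s) _ hf
      (fun y hy z hz => hy.2 z hz)
    exact ⟨B', h1.trans (fun y hy => hy.1), h2, h3⟩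
  obtain ⟨g, hgmono, hgmem, hgst⟩ := fusion (A₀ := A')
      (Φ := fun f B => ∀ s ∈ f.powerset, ∀ n ∈ Finset.range (f.card + 1), Q (s, n) B)
      (by
        obtain ⟨B', h1, h2, h3⟩ := shrink_list Q hQmono hQreach [(∅, 0)] A' hA'inf
        refine ⟨B', h1, h2, ?_⟩
        intro s hs n hn
        rw [Finset.mem_powerset, Finset.subset_empty] at hs
        subst hs
        rw [Finset.card_empty, Finset.mem_range] at hn
        interval_cases n
        exact h3 (∅, 0) (by simp))
      (by
        intro f B hsub hinf hΦ
        obtain ⟨x, hx⟩ := hinf.nonempty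
        have hB'' : {y ∈ B | x < y}.Infinite := infinite_above hinf x
        obtain ⟨B', h1, h2, h3⟩ := shrink_list Q hQmono hQreach
          ((insert x f).powerset ×ˢ Finset.range (f.card + 2)).toList {y ∈ B | x < y} hB''
        refine ⟨x, hx, B', h1.trans (fun y hy => hy.1), h2, fun y hy => (h1 hy).2, ?_⟩
        intro s hs n hn
        refine h3 (s, n) (Finset.mem_toList.2 (Finset.mem_product.2 ⟨hs, ?_⟩))
        rw [Finset.mem_range] at hn ⊢
        have : (insert x f).card ≤ f.card + 1 := Finset.card_insert_le x f
        omega)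
  set C' : Set ℕ := Set.range g with hC'
  have hC'A : C' ⊆ A' := by rintro y ⟨k, rfl⟩; exact hgmem k
  have hC'inf : C'.Infinite := Set.infinite_range_of_injective hgmono.injective
  have habC' : above a C' := fun y hy z hz => (hC'A hy).2 z hz
  have hBinf : (↑a ∪ C' : Set ℕ).Infinite := hC'inf.mono Set.subset_union_right
  refine ⟨⟨↑a ∪ C', hBinf⟩, ?_, ?_⟩
  · refine mem_enbhd.2 ⟨seg_of_between habC' Set.subset_union_left Set.Subset.rfl, ?_⟩
    exact Set.union_subset haA (fun y hy => (hC'A hy).1)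
  · rw [Set.eq_empty_iff_forall_notMem]
    rintro D ⟨hD1, hD2⟩
    obtain ⟨hDseg, hDsub⟩ := mem_enbhd.1 hD1
    obtain ⟨n, hDn⟩ := Set.mem_iUnion.1 (hcov' hD2)
    obtain ⟨A'', hA''sub, hA''inf, htail, hΦ⟩ := hgst n
    set s : Finset ℕ := (Finset.image g (Finset.range n)).filter (· ∈ D.1) with hsdef
    have hsQ : Q (s, n) A'' := hΦ s (Finset.mem_powerset.2 (Finset.filter_subset _ _)) n
      (by
        rw [Finset.mem_range,
          Finset.card_image_of_injective _ hgmono.injective, Finset.card_range]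
        omega)
    refine Set.eq_empty_iff_forall_notMem.1 hsQ D ⟨⟨?_, ?_⟩, hDn⟩
    · intro y hy
      rcases Finset.mem_union.1 (Finset.mem_coe.1 hy) with h' | h'
      · exact hDseg.1 (Finset.mem_coe.2 h')
      · exact (Finset.mem_filter.1 h').2
    · intro y hyD
      rcases hDsub hyD with h' | h'
      · exact Or.inl (Finset.mem_coe.2 (Finset.mem_union_left _ (Finset.mem_coe.1 h')))
      · obtain ⟨j, rfl⟩ := h'
        rcases Nat.lt_or_ge j n with hj | hj
        · refine Or.inl (Finset.mem_coe.2 (Finset.mem_union_right _ ?_))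
          exact Finset.mem_filter.2 ⟨Finset.mem_image.2 ⟨j, Finset.mem_range.2 hj, rfl⟩, hyD⟩
        · exact Or.inr (htail j hj)

/-- Ramsey null sets are meager. -/
lemma ramseyNull_isMeagre {X : Set NInfty} (hX : EIsRamseyNull X) : IsMeagre X := by
  have hnwd : IsNowhereDense X := by
    show interior (closure X) = ∅
    rw [Set.eq_empty_iff_forall_notMem]
    intro D hD
    obtain ⟨c, hcseg, hcsub⟩ := open_mem isOpen_interior hD
    have hne : (enbhd c D).Nonempty := ⟨D, mem_enbhd.2 ⟨hcseg, Set.Subset.rfl⟩⟩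
    obtain ⟨B, hB, hBX⟩ := hX c D hne
    obtain ⟨hBseg, hBsub⟩ := mem_enbhd.1 hB
    have hBcl : B ∈ closure X := interior_subset (hcsub B hBseg hBsub)
    obtain ⟨E, hE⟩ := mem_closure_iff.1 hBcl (enbhd c B) (isOpen_enbhd c B)
      (mem_enbhd.2 ⟨hBseg, Set.Subset.rfl⟩)
    exact Set.eq_empty_iff_forall_notMem.1 hBX E hE
  exact isMeagre_iff_countable_union_isNowhereDense.2
    ⟨{X}, by simpa using hnwd, Set.countable_singleton X, by simp⟩

lemma enbhd_trans {a : Finset ℕ} {A B₁ B : NInfty} (h1 : B ∈ enbhd a B₁)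
    (h2 : B₁ ∈ enbhd a A) : B ∈ enbhd a A :=
  mem_enbhd.2 ⟨(mem_enbhd.1 h1).1, (mem_enbhd.1 h1).2.trans (mem_enbhd.1 h2).2⟩

lemma enbhd_sub {a : Finset ℕ} {B₁ B : NInfty} (h1 : B ∈ enbhd a B₁) :
    enbhd a B ⊆ enbhd a B₁ := fun D hD => enbhd_trans hD h1

/-- Ellentuck's theorem: `𝒳 ⊆ ℕ^[∞]` is Ramsey iff it has the Baire property w.r.t. the
exponential topology, and Ramsey null iff it is meager w.r.t. the exponential topology. -/
theorem ellentuck_theorem (X : Set NInfty) :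
    (EIsRamsey X ↔ EHasBaireProperty X) ∧
    (EIsRamseyNull X ↔ @IsMeagre NInfty expTop X) := by
  constructor
  · constructor
    · -- Ramsey → Baire property
      intro hX
      refine ⟨interior X, X \ interior X, isOpen_interior, ?_, ?_⟩
      · apply ramseyNull_isMeagre
        intro a A hne
        obtain ⟨B, hB, hBX⟩ := hX a A hne
        rcases hBX with h | h
        · refine ⟨B, hB, Set.eq_empty_iff_forall_notMem.2 ?_⟩
          rintro D ⟨hD1, hD2⟩
          exact hD2.2 ((isOpen_enbhd a B).subset_interior_iff.2 h hD1)
        · refine ⟨B, hB, Set.eq_empty_iff_forall_notMem.2 ?_⟩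
          rintro D ⟨hD1, hD2⟩
          exact Set.eq_empty_iff_forall_notMem.1 h D ⟨hD1, hD2.1⟩
      · rw [Set.symmDiff_def]
        ext D
        constructor
        · intro hD
          by_cases h : D ∈ interior X
          · exact Or.inl ⟨h, fun h' => h'.2 h⟩
          · exact Or.inr ⟨⟨hD, h⟩, h⟩
        · rintro (⟨h1, -⟩ | ⟨⟨h1, -⟩, -⟩)
          · exact interior_subset h1
          · exact h1
    · -- Baire property → Ramsey
      rintro ⟨U, M, hUopen, hMmeagre, rfl⟩
      intro a A hne
      obtain ⟨B₁, hB₁, hB₁M⟩ := isMeagre_ramseyNull hMmeagre a A hne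
      have hB₁ne : (enbhd a B₁).Nonempty :=
        ⟨B₁, mem_enbhd.2 ⟨(mem_enbhd.1 hB₁).1, Set.Subset.rfl⟩⟩
      obtain ⟨B, hB, hBU⟩ := isOpen_completelyRamsey hUopen a B₁ hB₁ne
      refine ⟨B, enbhd_trans hB hB₁, ?_⟩
      have hBM : ∀ D ∈ enbhd a B, D ∉ M := fun D hD hDM =>
        Set.eq_empty_iff_forall_notMem.1 hB₁M D ⟨enbhd_sub hB hD, hDM⟩
      rcases hBU with h | h
      · refine Or.inl ?_
        intro D hD
        rw [Set.symmDiff_def]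
        exact Or.inl ⟨h hD, hBM D hD⟩
      · refine Or.inr (Set.eq_empty_iff_forall_notMem.2 ?_)
        rintro D ⟨hD1, hD2⟩
        rw [Set.symmDiff_def] at hD2
        rcases hD2 with ⟨h1, -⟩ | ⟨h1, -⟩
        · exact Set.eq_empty_iff_forall_notMem.1 h D ⟨hD1, h1⟩
        · exact hBM D hD1 h1
  · exact ⟨ramseyNull_isMeagre, isMeagre_ramseyNull⟩
end

section
/- (Finite Ramsey theorem for 𝒫.) Let (A,S_A) ∈ 𝒫 and k, n, r ∈ ℕ with r ≥ 1. Then there exists m ∈ ℕ such that for every coloring c : 𝒜𝒫_k^m((A,S_A)) → {0,…,r−1} there exists (b,S_b) ∈ 𝒜𝒫_n^m((A,S_A)) such that c is constant on 𝒜𝒫_k^m((A,S_A),(b,S_b)). -/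
open Set

/-- A candidate pair: a vertex set `x ⊆ ℕ` together with a collection of finite subsets of ℕ. -/
abbrev PPair : Type := Set ℕ × Set (Finset ℕ)

/-- `S` is hereditary: subsets of members are members. -/
def Hereditary (S : Set (Finset ℕ)) : Prop := ∀ u v : Finset ℕ, u ⊆ v → v ∈ S → u ∈ S

/-- `(x, S)` is a polyhedron pair: members of `S` are finite subsets of `x`,
`S` is hereditary, and `⋃ S = x`. -/
def IsPolyPair (P : PPair) : Prop :=
  (∀ u ∈ P.2, (u : Set ℕ) ⊆ P.1) ∧ Hereditary P.2 ∧ (∀ n ∈ P.1, ∃ u ∈ P.2, n ∈ u)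

/-- Members of `𝒫`: polyhedron pairs with infinite vertex set. -/
def InfPoly (P : PPair) : Prop := IsPolyPair P ∧ P.1.Infinite

/-- Members of `𝒜𝒫`: polyhedron pairs with finite vertex set. -/
def FinPoly (P : PPair) : Prop := IsPolyPair P ∧ P.1.Finite

/-- `S ↾ a = {u ∩ a : u ∈ S}`. -/
def frestrict (S : Set (Finset ℕ)) (a : Finset ℕ) : Set (Finset ℕ) :=
  (fun u => u ∩ a) '' S

/-- The `n`-th approximation `r_n(x,S) = (x ↾ n, S ↾ (x ↾ n))`. -/
noncomputable def approx (n : ℕ) (P : PPair) : PPair :=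
  (↑(vrestrict P.1 n), frestrict P.2 (vrestrict P.1 n))

/-- `(y,T) ≤ (x,S)` iff `y ⊆ x` and `T ⊆ S`. -/
def ple (P Q : PPair) : Prop := P.1 ⊆ Q.1 ∧ P.2 ⊆ Q.2

/-- `(a,S_a) ≤_fin (b,S_b)` iff `(a,S_a) ≤ (b,S_b)` and `max a = max b`. -/
def plefin (P Q : PPair) : Prop := ple P Q ∧ sSup P.1 = sSup Q.1

/-- The Ellentuck neighborhood `[(a,S_a); (A,S_A)]` inside `𝒫`. -/
def nbhdRaw (a A : PPair) : Set PPair :=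
  {B | InfPoly B ∧ ple B A ∧ ∃ n, approx n B = a}

/-- `depth_{(A,S_A)}(a,S_a)`. -/
noncomputable def pdepth (A a : PPair) : ℕ := sInf {n | plefin a (approx n A)}

/-- `𝒜𝒫((A,S_A))`: finite pairs approximating below `(A,S_A)`. -/
def APin (A : PPair) : Set PPair := {a | FinPoly a ∧ (nbhdRaw a A).Nonempty}

/-- `𝒜𝒫_k^m((A,S_A))`: members of `𝒜𝒫((A,S_A))` of length `k` and depth `m` in `(A,S_A)`. -/
noncomputable def APkm (A : PPair) (k m : ℕ) : Set PPair :=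
  {a ∈ APin A | a.1.ncard = k ∧ pdepth A a = m}

/-- `𝒜𝒫_k^m((A,S_A),(b,S_b))`: members of `𝒜𝒫_k^m((A,S_A))` which are `≤_fin (b,S_b)`. -/
noncomputable def APkmb (A : PPair) (k m : ℕ) (b : PPair) : Set PPair :=
  {a ∈ APkm A k m | plefin a b}


------------------------------------------------------------------
-- Auxiliary results

theorem finRamsey (r : ℕ) : ∀ k n : ℕ, ∃ R : ℕ, ∀ V : Finset ℕ, R ≤ V.card →
    ∀ χ : Finset ℕ → Fin r, ∃ t, t ⊆ V ∧ t.card = n ∧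
      ∀ s, s ⊆ t → ∀ s', s' ⊆ t → s.card = k → s'.card = k → χ s = χ s' := by
  intro k
  induction k with
  | zero =>
    intro n
    refine ⟨n, fun V hV χ => ?_⟩
    obtain ⟨t, ht, hcard⟩ := Finset.exists_subset_card_eq (n := n) hV
    refine ⟨t, ht, hcard, fun s hs s' hs' h h' => ?_⟩
    rw [Finset.card_eq_zero.mp h, Finset.card_eq_zero.mp h']
  | succ k IH =>
    intro n
    choose Rk hRk using IH
    set g : ℕ → ℕ := fun i => Nat.rec 0 (fun _ acc => Rk acc + 1) i with hgdef
    have hg : ∀ i, g (i + 1) = Rk (g i) + 1 := fun i => rfl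
    have helper : ∀ (i : ℕ) (V : Finset ℕ), g i ≤ V.card → ∀ χ : Finset ℕ → Fin r,
        ∃ W, W ⊆ V ∧ W.card = i ∧ ∃ f : ℕ → Fin r,
          ∀ s, s ⊆ W → s.card = k + 1 → ∀ hs : s.Nonempty, χ s = f (s.min' hs) := by
      intro i
      induction i with
      | zero =>
        intro V _ χ
        refine ⟨∅, Finset.empty_subset _, Finset.card_empty, fun _ => χ ∅, ?_⟩
        intro s hs hcard _
        rw [Finset.subset_empty.mp hs] at hcard
        simp at hcard
      | succ i IHi =>
        intro V hV χ
        have hVne : V.Nonempty := by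
          rw [← Finset.card_pos]
          calc 0 < g (i + 1) := by rw [hg]; omega
            _ ≤ V.card := hV
        set v := V.min' hVne with hvdef
        have hvV : v ∈ V := V.min'_mem hVne
        have hcard' : Rk (g i) ≤ (V.erase v).card := by
          rw [Finset.card_erase_of_mem hvV]
          have := hV; rw [hg] at this; omega
        obtain ⟨t', ht'sub, ht'card, ht'hom⟩ :=
          hRk (g i) (V.erase v) hcard' (fun s => χ (insert v s))
        obtain ⟨W', hW'sub, hW'card, f', hf'⟩ := IHi t' (le_of_eq ht'card.symm) χ
        have hc0 : ∃ c0 : Fin r, ∀ s, s ⊆ t' → s.card = k → χ (insert v s) = c0 := by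
          by_cases h : ∃ s0, s0 ⊆ t' ∧ s0.card = k
          · obtain ⟨s0, hs0, hs0c⟩ := h
            exact ⟨χ (insert v s0), fun s hs hsc => ht'hom s hs s0 hs0 hsc hs0c⟩
          · exact ⟨χ ∅, fun s hs hsc => absurd ⟨s, hs, hsc⟩ h⟩
        obtain ⟨c0, hc0⟩ := hc0
        have hW'V : ∀ y ∈ W', y ∈ V.erase v := fun y hy => ht'sub (hW'sub hy)
        have hvW' : v ∉ W' := fun h => (Finset.mem_erase.mp (hW'V v h)).1 rfl
        refine ⟨insert v W', ?_, ?_, (fun x => if x = v then c0 else f' x), ?_⟩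
        · exact Finset.insert_subset hvV
            (fun y hy => Finset.mem_of_mem_erase (hW'V y hy))
        · rw [Finset.card_insert_of_notMem hvW', hW'card]
        · intro s hsub hcard hs
          by_cases hv : v ∈ s
          · have hmin : s.min' hs = v := by
              refine le_antisymm (s.min'_le v hv) (Finset.le_min' _ _ _ ?_)
              intro y hy
              rcases Finset.mem_insert.mp (hsub hy) with h | h
              · exact le_of_eq h.symm
              · exact V.min'_le y (Finset.mem_of_mem_erase (hW'V y h))
            rw [hmin]
            show χ s = if v = v then c0 else f' v
            rw [if_pos rfl]
            have herase : s.erase v ⊆ W' := by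
              intro y hy
              rcases Finset.mem_insert.mp (hsub (Finset.mem_of_mem_erase hy)) with h | h
              · exact absurd h (Finset.ne_of_mem_erase hy)
              · exact h
            have h1 : χ (insert v (s.erase v)) = c0 :=
              hc0 _ (herase.trans hW'sub)
                (by rw [Finset.card_erase_of_mem hv, hcard]; rfl)
            rwa [Finset.insert_erase hv] at h1
          · have hsW' : s ⊆ W' := by
              intro y hy
              rcases Finset.mem_insert.mp (hsub hy) with h | h
              · exact absurd (h ▸ hy) hv
              · exact h
            have hne : s.min' hs ≠ v := fun h => hv (h ▸ s.min'_mem hs)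
            show χ s = if s.min' hs = v then c0 else f' (s.min' hs)
            rw [if_neg hne]
            exact hf' s hsW' hcard hs
    refine ⟨g (r * n + 1), fun V hV χ => ?_⟩
    obtain ⟨W, hWV, hWcard, f, hf⟩ := helper (r * n + 1) V hV χ
    have hmaps : ∀ x ∈ W, f x ∈ (Finset.univ : Finset (Fin r)) := fun x _ => Finset.mem_univ _
    have hlt : (Finset.univ : Finset (Fin r)).card * n < W.card := by
      rw [hWcard, Finset.card_univ, Fintype.card_fin]; omega
    obtain ⟨y, -, hy⟩ := Finset.exists_lt_card_fiber_of_mul_lt_card_of_maps_to hmaps hlt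
    obtain ⟨t, htfib, htcard⟩ :=
      Finset.exists_subset_card_eq (s := W.filter (fun x => f x = y)) (n := n) (le_of_lt hy)
    have htW : t ⊆ W := htfib.trans (Finset.filter_subset _ _)
    refine ⟨t, htW.trans hWV, htcard, ?_⟩
    have key : ∀ s, s ⊆ t → s.card = k + 1 → χ s = y := by
      intro s hst hsc
      have hne : s.Nonempty := Finset.card_pos.mp (by omega)
      rw [hf s (hst.trans htW) hsc hne]
      have : s.min' hne ∈ W.filter (fun x => f x = y) := htfib (hst (s.min'_mem hne))
      exact (Finset.mem_filter.mp this).2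
    intro s hs s' hs' h h'
    rw [key s hs h, key s' hs' h']

-- auxiliary machinery

/-- The minimal simplicial complex (empty set plus singletons) on a vertex set. -/
def facesS (X : Set ℕ) : Set (Finset ℕ) := {u | u = ∅ ∨ ∃ v ∈ X, u = {v}}

noncomputable def mkPP (s : Finset ℕ) : PPair := (↑s, facesS ↑s)

lemma isPolyPair_facesS (X : Set ℕ) : IsPolyPair (X, facesS X) := by
  refine ⟨?_, ?_, ?_⟩
  · rintro u (rfl | ⟨v, hv, rfl⟩)
    · simp
    · simpa using hv
  · rintro u v huv (rfl | ⟨w, hw, rfl⟩)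
    · exact Or.inl (Finset.subset_empty.mp huv)
    · rcases Finset.subset_singleton_iff.mp huv with rfl | rfl
      · exact Or.inl rfl
      · exact Or.inr ⟨w, hw, rfl⟩
  · intro x hx
    exact ⟨{x}, Or.inr ⟨x, hx, rfl⟩, Finset.mem_singleton_self x⟩

lemma frestrict_facesS {X : Set ℕ} {s : Finset ℕ} (hs : ↑s ⊆ X) :
    frestrict (facesS X) s = facesS ↑s := by
  ext u
  constructor
  · rintro ⟨w, (rfl | ⟨v, hv, rfl⟩), rfl⟩
    · exact Or.inl (Finset.empty_inter s)
    · by_cases hvs : v ∈ s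
      · right
        refine ⟨v, hvs, ?_⟩
        show {v} ∩ s = {v}
        rw [Finset.singleton_inter_of_mem hvs]
      · left
        show {v} ∩ s = ∅
        rw [Finset.singleton_inter_of_notMem hvs]
  · rintro (rfl | ⟨v, hv, rfl⟩)
    · exact ⟨∅, Or.inl rfl, Finset.empty_inter s⟩
    · exact ⟨{v}, Or.inr ⟨v, hs hv, rfl⟩, Finset.singleton_inter_of_mem hv⟩

lemma empty_mem_of_infPoly {A : PPair} (hA : InfPoly A) : (∅ : Finset ℕ) ∈ A.2 := by
  obtain ⟨x, hx⟩ := hA.2.nonempty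
  obtain ⟨u, hu, -⟩ := hA.1.2.2 x hx
  exact hA.1.2.1 ∅ u (Finset.empty_subset u) hu

lemma singleton_mem_of_infPoly {A : PPair} (hA : InfPoly A) {v : ℕ} (hv : v ∈ A.1) :
    ({v} : Finset ℕ) ∈ A.2 := by
  obtain ⟨u, hu, hvu⟩ := hA.1.2.2 v hv
  exact hA.1.2.1 {v} u (Finset.singleton_subset_iff.mpr hvu) hu

lemma facesS_subset {A : PPair} (hA : InfPoly A) {X : Set ℕ} (hX : X ⊆ A.1) :
    facesS X ⊆ A.2 := by
  rintro u (rfl | ⟨v, hv, rfl⟩)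
  · exact empty_mem_of_infPoly hA
  · exact singleton_mem_of_infPoly hA (hX hv)

-- vrestrict lemmas
lemma mem_vrestrict_iff {x : Set ℕ} (hx : x.Infinite) {j y : ℕ} :
    y ∈ vrestrict x j ↔ y ∈ x ∧ y < Nat.nth (· ∈ x) j := by
  classical
  have hx' : (setOf (· ∈ x)).Infinite := hx
  constructor
  · intro hy
    obtain ⟨i, hi, rfl⟩ := Finset.mem_image.mp hy
    rw [Finset.mem_range] at hi
    exact ⟨Nat.nth_mem_of_infinite hx' i, (Nat.nth_lt_nth hx').mpr hi⟩
  · rintro ⟨hyx, hylt⟩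
    have h1 : Nat.nth (· ∈ x) (Nat.count (· ∈ x) y) = y := Nat.nth_count hyx
    have h2 : Nat.count (· ∈ x) y < j := by
      by_contra h
      push_neg at h
      have := (Nat.nth_le_nth hx').mpr h
      omega
    exact Finset.mem_image.mpr ⟨_, Finset.mem_range.mpr h2, h1⟩

lemma vrestrict_zero (x : Set ℕ) : vrestrict x 0 = ∅ := by
  simp [vrestrict]

lemma card_vrestrict_s10 {x : Set ℕ} (hx : x.Infinite) (j : ℕ) : (vrestrict x j).card = j := by
  have hx' : (setOf (· ∈ x)).Infinite := hx
  rw [vrestrict, Finset.card_image_of_injective _ (Nat.nth_injective hx'), Finset.card_range]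

lemma vrestrict_mono {x : Set ℕ} {j j' : ℕ} (h : j ≤ j') : vrestrict x j ⊆ vrestrict x j' :=
  Finset.image_subset_image (by simpa using Finset.range_subset_range.mpr h)

lemma vrestrict_subset {x : Set ℕ} (hx : x.Infinite) (j : ℕ) : ↑(vrestrict x j) ⊆ x := by
  intro y hy
  rw [Finset.mem_coe, mem_vrestrict_iff hx] at hy
  exact hy.1

lemma sSup_vrestrict {x : Set ℕ} (hx : x.Infinite) {j : ℕ} (hj : 1 ≤ j) :
    sSup ↑(vrestrict x j) = Nat.nth (· ∈ x) (j - 1) := by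
  have hx' : (setOf (· ∈ x)).Infinite := hx
  have hne : (vrestrict x j).Nonempty := by
    rw [← Finset.card_pos, card_vrestrict_s10 hx]; omega
  rw [hne.csSup_eq_max']
  refine le_antisymm (Finset.max'_le _ _ _ ?_) (Finset.le_max' _ _ ?_)
  · intro y hy
    obtain ⟨i, hi, rfl⟩ := Finset.mem_image.mp hy
    rw [Finset.mem_range] at hi
    exact (Nat.nth_le_nth hx').mpr (by omega)
  · exact Finset.mem_image.mpr ⟨j - 1, Finset.mem_range.mpr (by omega), rfl⟩

lemma vrestrict_initial {X : Set ℕ} (hX : X.Infinite) {s : Finset ℕ} (hs : ↑s ⊆ X)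
    (hbound : ∀ y ∈ X, y ∉ s → ∀ z ∈ s, z < y) : vrestrict X s.card = s := by
  classical
  have hX' : (setOf (· ∈ X)).Infinite := hX
  have hsub : s ⊆ vrestrict X s.card := by
    intro z hz
    rw [mem_vrestrict_iff hX]
    refine ⟨hs hz, ?_⟩
    have hcount : Nat.count (· ∈ X) z < s.card := by
      rw [Nat.count_eq_card_filter_range]
      calc ((Finset.range z).filter (· ∈ X)).card ≤ (s.erase z).card := by
            apply Finset.card_le_card
            intro y hy
            rw [Finset.mem_filter, Finset.mem_range] at hy
            have hys : y ∈ s := by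
              by_contra hns
              exact absurd hy.1 (by have := hbound y hy.2 hns z hz; omega)
            exact Finset.mem_erase.mpr ⟨by omega, hys⟩
        _ < s.card := Finset.card_erase_lt_of_mem hz
    calc z = Nat.nth (· ∈ X) (Nat.count (· ∈ X) z) := (Nat.nth_count (hs hz)).symm
      _ < Nat.nth (· ∈ X) s.card := (Nat.nth_lt_nth hX').mpr hcount
  have hcards : (vrestrict X s.card).card ≤ s.card := le_of_eq (card_vrestrict_s10 hX _)
  exact (Finset.eq_of_subset_of_card_le hsub hcards).symm

lemma frestrict_empty {S : Set (Finset ℕ)} (hS : S.Nonempty) :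
    frestrict S ∅ = {(∅ : Finset ℕ)} := by
  ext u
  constructor
  · rintro ⟨w, -, rfl⟩
    simp
  · rintro rfl
    exact ⟨hS.choose, hS.choose_spec, Finset.inter_empty _⟩

lemma plefin_of_mem_APkm {A a : PPair} {k m : ℕ} (hm : 1 ≤ m) (ha : a ∈ APkm A k m) :
    plefin a (approx m A) := by
  have hd : pdepth A a = m := ha.2.2
  have hne : {n | plefin a (approx n A)}.Nonempty := by
    by_contra h
    rw [Set.not_nonempty_iff_eq_empty] at h
    rw [pdepth, h, Nat.sInf_empty] at hd
    omega
  have hmem := Nat.sInf_mem hne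
  rwa [← pdepth, hd] at hmem

lemma mkPP_mem_APkm {A : PPair} (hA : InfPoly A) {m : ℕ} (hm : 1 ≤ m) {t : Finset ℕ}
    (ht : t ⊆ vrestrict A.1 (m - 1)) :
    mkPP (insert (Nat.nth (· ∈ A.1) (m - 1)) t) ∈ APkm A (t.card + 1) m := by
  have hAinf : A.1.Infinite := hA.2
  have hA1' : (setOf (· ∈ A.1)).Infinite := hAinf
  set top := Nat.nth (· ∈ A.1) (m - 1) with htopdef
  have htopA : top ∈ A.1 := Nat.nth_mem_of_infinite hA1' _
  have htlt : ∀ z ∈ t, z < top := fun z hz => ((mem_vrestrict_iff hAinf).mp (ht hz)).2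
  have htopt : top ∉ t := fun h => lt_irrefl top (htlt top h)
  set s := insert top t with hsdef
  have htops : top ∈ s := Finset.mem_insert_self _ _
  have hscard : s.card = t.card + 1 := Finset.card_insert_of_notMem htopt
  have hzle : ∀ z ∈ s, z ≤ top := by
    intro z hz
    rcases Finset.mem_insert.mp hz with rfl | h
    · exact le_refl _
    · exact (htlt z h).le
  have hsA : (↑s : Set ℕ) ⊆ A.1 := by
    intro z hz
    rcases Finset.mem_insert.mp (Finset.mem_coe.mp hz) with rfl | h
    · exact htopA
    · exact ((mem_vrestrict_iff hAinf).mp (ht h)).1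
  have hsvm : s ⊆ vrestrict A.1 m := by
    intro z hz
    rw [mem_vrestrict_iff hAinf]
    refine ⟨hsA hz, ?_⟩
    have h1 : top < Nat.nth (· ∈ A.1) m := (Nat.nth_lt_nth hA1').mpr (by omega)
    have h2 := hzle z hz
    omega
  have hsne : s.Nonempty := ⟨top, htops⟩
  have hsSup : sSup (↑s : Set ℕ) = top := by
    rw [hsne.csSup_eq_max']
    exact le_antisymm (Finset.max'_le _ _ _ hzle) (Finset.le_max' _ _ htops)
  -- the witnessing infinite polyhedron pair
  set X : Set ℕ := ↑s ∪ {x | x ∈ A.1 ∧ top < x} with hXdef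
  have hXA : X ⊆ A.1 := Set.union_subset hsA (fun x hx => hx.1)
  have htail : {x | x ∈ A.1 ∧ top < x}.Infinite := by
    have heq : {x | x ∈ A.1 ∧ top < x} = A.1 \ Set.Iic top := by
      ext x
      simp [Set.mem_diff, Set.mem_Iic, not_le]
    rw [heq]
    exact hAinf.diff (Set.finite_Iic top)
  have hXinf : X.Infinite := htail.mono Set.subset_union_right
  have hvX : vrestrict X s.card = s := by
    apply vrestrict_initial hXinf Set.subset_union_left
    intro y hy hys z hz
    have hty : top < y := by
      rcases hy with hy | hy
      · exact absurd (Finset.mem_coe.mp hy) hys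
      · exact hy.2
    have := hzle z hz
    omega
  have happrox : approx s.card (X, facesS X) = mkPP s := by
    have h2 : frestrict (facesS X) s = facesS ↑s := frestrict_facesS Set.subset_union_left
    show ((↑(vrestrict X s.card) : Set ℕ), frestrict (facesS X) (vrestrict X s.card)) = mkPP s
    rw [hvX, h2]
    rfl
  have hnbhd : (nbhdRaw (mkPP s) A).Nonempty := by
    refine ⟨(X, facesS X), ⟨isPolyPair_facesS X, hXinf⟩, ⟨hXA, facesS_subset hA hXA⟩,
      s.card, happrox⟩
  have hmemd : plefin (mkPP s) (approx m A) := by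
    refine ⟨⟨?_, ?_⟩, ?_⟩
    · intro z hz
      exact Finset.mem_coe.mpr (hsvm (Finset.mem_coe.mp hz))
    · rintro u (rfl | ⟨v, hv, rfl⟩)
      · refine ⟨∅, empty_mem_of_infPoly hA, ?_⟩
        show ∅ ∩ vrestrict A.1 m = ∅
        exact Finset.empty_inter _
      · refine ⟨{v}, singleton_mem_of_infPoly hA (hsA hv), ?_⟩
        show {v} ∩ vrestrict A.1 m = {v}
        exact Finset.singleton_inter_of_mem (hsvm (Finset.mem_coe.mp hv))
    · show sSup (↑s : Set ℕ) = sSup (↑(vrestrict A.1 m) : Set ℕ)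
      rw [hsSup, sSup_vrestrict hAinf hm]
  have hlow : ∀ j ∈ {n | plefin (mkPP s) (approx n A)}, m ≤ j := by
    intro j hj
    by_contra hlt
    push_neg at hlt
    rcases Nat.eq_zero_or_pos j with rfl | hj1
    · have h0 := hj.1.1 (Finset.mem_coe.mpr htops)
      have : (approx 0 A).1 = (↑(vrestrict A.1 0) : Set ℕ) := rfl
      rw [this, vrestrict_zero] at h0
      simp at h0
    · have h2 : sSup (↑s : Set ℕ) = sSup (↑(vrestrict A.1 j) : Set ℕ) := hj.2
      rw [hsSup, sSup_vrestrict hAinf hj1] at h2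
      have := Nat.nth_injective hA1' (htopdef ▸ h2)
      omega
  have hdepth : pdepth A (mkPP s) = m :=
    le_antisymm (Nat.sInf_le hmemd) (le_csInf ⟨m, hmemd⟩ hlow)
  refine ⟨⟨⟨isPolyPair_facesS ↑s, s.finite_toSet⟩, hnbhd⟩, ?_, hdepth⟩
  show (↑s : Set ℕ).ncard = t.card + 1
  rw [Set.ncard_coe_finset, hscard]

lemma eq_empty_pair {A a : PPair} (ha : a ∈ APin A) (h1 : a.1 = ∅) :
    a = ((∅ : Set ℕ), ({∅} : Set (Finset ℕ))) := by
  obtain ⟨-, B, hBinf, -, j, hBa⟩ := ha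
  have hBinf1 : B.1.Infinite := hBinf.2
  have h1' : (↑(vrestrict B.1 j) : Set ℕ) = (∅ : Set ℕ) := by
    rw [show (↑(vrestrict B.1 j) : Set ℕ) = (approx j B).1 from rfl, hBa, h1]
  have hvempty : vrestrict B.1 j = ∅ := Finset.coe_eq_empty.mp h1'
  have hB2ne : B.2.Nonempty := by
    obtain ⟨x, hx⟩ := hBinf1.nonempty
    obtain ⟨u, hu, -⟩ := hBinf.1.2.2 x hx
    exact ⟨u, hu⟩
  have h2 : a.2 = {∅} := by
    rw [← hBa]
    show frestrict B.2 (vrestrict B.1 j) = {∅}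
    rw [hvempty]
    exact frestrict_empty hB2ne
  exact Prod.ext h1 h2

lemma empty_pair_pdepth {A : PPair} (hA : InfPoly A) :
    pdepth A ((∅ : Set ℕ), ({∅} : Set (Finset ℕ))) = 0 := by
  have hA2ne : A.2.Nonempty := ⟨∅, empty_mem_of_infPoly hA⟩
  have h0 : plefin ((∅ : Set ℕ), ({∅} : Set (Finset ℕ))) (approx 0 A) := by
    refine ⟨⟨Set.empty_subset _, ?_⟩, ?_⟩
    · show ({∅} : Set (Finset ℕ)) ⊆ frestrict A.2 (vrestrict A.1 0)
      rw [vrestrict_zero, frestrict_empty hA2ne]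
    · show sSup (∅ : Set ℕ) = sSup (↑(vrestrict A.1 0) : Set ℕ)
      rw [vrestrict_zero]
      simp
  exact Nat.le_zero.mp (Nat.sInf_le h0)

lemma approx_zero_eq {A : PPair} (hA : InfPoly A) :
    approx 0 A = ((∅ : Set ℕ), ({∅} : Set (Finset ℕ))) := by
  have hA2ne : A.2.Nonempty := ⟨∅, empty_mem_of_infPoly hA⟩
  show ((↑(vrestrict A.1 0) : Set ℕ), frestrict A.2 (vrestrict A.1 0)) = _
  rw [vrestrict_zero, frestrict_empty hA2ne]
  simp

lemma empty_pair_mem_APkm {A : PPair} (hA : InfPoly A) :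
    ((∅ : Set ℕ), ({∅} : Set (Finset ℕ))) ∈ APkm A 0 0 := by
  refine ⟨⟨⟨?_, ?_⟩, ⟨A, hA, ⟨subset_rfl, subset_rfl⟩, 0, approx_zero_eq hA⟩⟩, ?_, empty_pair_pdepth hA⟩
  · refine ⟨?_, ?_, ?_⟩
    · rintro u hu
      rw [Set.mem_singleton_iff] at hu
      subst hu
      simp
    · intro u v huv hv
      rw [Set.mem_singleton_iff] at hv
      subst hv
      rw [Set.mem_singleton_iff]
      exact Finset.subset_empty.mp huv
    · rintro x hx
      exact absurd hx (Set.notMem_empty x)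
  · exact Set.finite_empty
  · exact Set.ncard_empty _

lemma APkmb_char {A : PPair} (hA : InfPoly A) {R k : ℕ} (hk : 1 ≤ k) {t : Finset ℕ}
    (ht : t ⊆ vrestrict A.1 R) {a : PPair}
    (ha : a ∈ APkmb A k (R + 1) (mkPP (insert (Nat.nth (· ∈ A.1) R) t))) :
    ∃ s : Finset ℕ, s ⊆ t ∧ s.card = k - 1 ∧
      a = mkPP (insert (Nat.nth (· ∈ A.1) R) s) := by
  classical
  set top := Nat.nth (· ∈ A.1) R with htopdef
  have haAPkm : a ∈ APkm A k (R + 1) := ha.1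
  have hplef : plefin a (mkPP (insert top t)) := ha.2
  have hpoly : IsPolyPair a := haAPkm.1.1.1
  have hcard : a.1.ncard = k := haAPkm.2.1
  have hAinf : A.1.Infinite := hA.2
  have hplem := plefin_of_mem_APkm (show 1 ≤ R + 1 by omega) haAPkm
  have hsup : sSup a.1 = top := by
    have h2 : sSup a.1 = sSup (↑(vrestrict A.1 (R + 1)) : Set ℕ) := hplem.2
    rw [sSup_vrestrict hAinf (by omega : 1 ≤ R + 1)] at h2
    simpa using h2
  have hab1 : a.1 ⊆ (↑(insert top t) : Set ℕ) := hplef.1.1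
  set sa : Finset ℕ := (insert top t).filter (· ∈ a.1) with hsadef
  have hsa : (↑sa : Set ℕ) = a.1 := by
    ext z
    simp only [hsadef, Finset.coe_filter, Set.mem_setOf_eq]
    exact ⟨fun h => h.2, fun h => ⟨Finset.mem_coe.mp (hab1 h), h⟩⟩
  have hsacard : sa.card = k := by
    rw [← Set.ncard_coe_finset, hsa, hcard]
  have hsane : sa.Nonempty := Finset.card_pos.mp (by omega)
  have htopsa : top ∈ sa := by
    have h1 : sSup (↑sa : Set ℕ) = sa.max' hsane := hsane.csSup_eq_max'
    rw [hsa, hsup] at h1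
    rw [h1]
    exact sa.max'_mem hsane
  have hA2sub : a.2 ⊆ facesS ↑(insert top t) := hplef.1.2
  have ha2 : a.2 = facesS (↑sa : Set ℕ) := by
    ext u
    constructor
    · intro hu
      rcases hA2sub hu with rfl | ⟨v, hv, rfl⟩
      · exact Or.inl rfl
      · refine Or.inr ⟨v, ?_, rfl⟩
        have hsub : (↑({v} : Finset ℕ) : Set ℕ) ⊆ a.1 := hpoly.1 _ hu
        have hva : v ∈ a.1 := hsub (by simp)
        rw [hsa]
        exact hva
    · rintro (rfl | ⟨v, hv, rfl⟩)
      · obtain ⟨x, hx⟩ : a.1.Nonempty := by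
          rw [← hsa]
          exact ⟨top, Finset.mem_coe.mpr htopsa⟩
        obtain ⟨u', hu', -⟩ := hpoly.2.2 x hx
        exact hpoly.2.1 ∅ u' (Finset.empty_subset _) hu'
      · have hva : v ∈ a.1 := by rw [← hsa]; exact hv
        obtain ⟨u', hu', hvu'⟩ := hpoly.2.2 v hva
        rcases hA2sub hu' with rfl | ⟨w, hw, rfl⟩
        · simp at hvu'
        · have hvw : v = w := by simpa using hvu'
          rw [hvw]
          exact hu'
  refine ⟨sa.erase top, ?_, ?_, ?_⟩
  · intro z hz
    have hz' := Finset.mem_erase.mp hz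
    have hz2 : z ∈ insert top t := (Finset.mem_filter.mp hz'.2).1
    rcases Finset.mem_insert.mp hz2 with h | h
    · exact absurd h hz'.1
    · exact h
  · rw [Finset.card_erase_of_mem htopsa, hsacard]
  · rw [Finset.insert_erase htopsa]
    exact Prod.ext hsa.symm ha2

/-- Finite Ramsey theorem for `𝒫`: given `(A,S_A) ∈ 𝒫` and `k, n, r` with `r ≥ 1`, there is
`m` such that every coloring `c : 𝒜𝒫_k^m((A,S_A)) → r` is constant on
`𝒜𝒫_k^m((A,S_A),(b,S_b))` for some `(b,S_b) ∈ 𝒜𝒫_n^m((A,S_A))`. -/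
theorem finite_ramsey_polyPair (A : PPair) (hA : InfPoly A) (k n r : ℕ) (hr : 1 ≤ r) :
    ∃ m : ℕ, ∀ c : PPair → Fin r, ∃ b ∈ APkm A n m,
      ∀ a ∈ APkmb A k m b, ∀ a' ∈ APkmb A k m b, c a = c a' := by
  have hAinf : A.1.Infinite := hA.2
  rcases Nat.eq_zero_or_pos n with rfl | hn
  · -- n = 0 : the empty pair works, and everything below it is the empty pair
    refine ⟨0, fun c => ⟨((∅ : Set ℕ), ({∅} : Set (Finset ℕ))), empty_pair_mem_APkm hA, ?_⟩⟩
    have key : ∀ x : PPair, x ∈ APkmb A k 0 ((∅ : Set ℕ), ({∅} : Set (Finset ℕ))) →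
        x = ((∅ : Set ℕ), ({∅} : Set (Finset ℕ))) := by
      intro x hx
      have hx1 : x.1 ⊆ (∅ : Set ℕ) := hx.2.1.1
      exact eq_empty_pair hx.1.1 (Set.subset_empty_iff.mp hx1)
    intro a ha a' ha'
    rw [key a ha, key a' ha']
  rcases Nat.eq_zero_or_pos k with rfl | hk
  · -- k = 0 < n : there is nothing of size 0 at positive depth
    refine ⟨n, fun c => ?_⟩
    have hb := mkPP_mem_APkm hA (show 1 ≤ n from hn)
      (subset_rfl : vrestrict A.1 (n - 1) ⊆ vrestrict A.1 (n - 1))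
    rw [card_vrestrict_s10 hAinf, show n - 1 + 1 = n by omega] at hb
    refine ⟨_, hb, ?_⟩
    intro a ha a' ha'
    exfalso
    have h0 : a.1.ncard = 0 := ha.1.2.1
    have hfin : a.1.Finite := ha.1.1.1.2
    have h1 : a.1 = ∅ := (Set.ncard_eq_zero hfin).mp h0
    have heq := eq_empty_pair ha.1.1 h1
    have hd : pdepth A a = n := ha.1.2.2
    rw [heq, empty_pair_pdepth hA] at hd
    omega
  · -- 1 ≤ k, 1 ≤ n : the Ramsey case
    obtain ⟨R, hR⟩ := finRamsey r (k - 1) (n - 1)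
    refine ⟨R + 1, fun c => ?_⟩
    set top := Nat.nth (· ∈ A.1) R with htopdef
    obtain ⟨t, htV, htcard, hthom⟩ :=
      hR (vrestrict A.1 R) (le_of_eq (card_vrestrict_s10 hAinf R).symm)
        (fun s => c (mkPP (insert top s)))
    have hb := mkPP_mem_APkm hA (show 1 ≤ R + 1 by omega)
      (show t ⊆ vrestrict A.1 (R + 1 - 1) from by simpa using htV)
    rw [htcard, show n - 1 + 1 = n by omega] at hb
    refine ⟨_, hb, ?_⟩
    intro a ha a' ha'
    obtain ⟨s, hst, hscard, haeq⟩ := APkmb_char hA hk htV ha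
    obtain ⟨s', hst', hscard', haeq'⟩ := APkmb_char hA hk htV ha'
    rw [haeq, haeq']
    exact hthom s hst s' hst' hscard hscard'
end

section
/- (Ramsey property for the class of finite ordered polyhedra.) For every pair of finite ordered polyhedra (a,S_a), (b,S_b) ∈ 𝒜𝒫 such that (a,S_a) admits a copy inside (b,S_b), and for every integer r ≥ 1, there exists (c,S_c) ∈ 𝒜𝒫 such that for every r-coloring of the set of copies of (a,S_a) inside (c,S_c) there exists a copy f of (b,S_b) inside (c,S_c) such that all copies of (a,S_a) whose image is contained in the image of f receive the same color. -/
open Set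

/-- `(a,S_a)` is a finite ordered polyhedron: `a` is a finite nonempty subset of `ℕ`,
`S_a` is a hereditary collection of subsets of `a` with `⋃ S_a = a`. -/
def FinOrdPoly (a : Finset ℕ) (Sa : Set (Finset ℕ)) : Prop :=
  a.Nonempty ∧ (∀ u ∈ Sa, u ⊆ a) ∧
    (∀ u v : Finset ℕ, u ⊆ v → v ∈ Sa → u ∈ Sa) ∧
    (∀ i ∈ a, ∃ u ∈ Sa, i ∈ u)

/-- `f` is a copy of `(a,S_a)` inside `(c,S_c)`: a strictly increasing injection of `a`
into `c` such that for every `u ⊆ a`, `u ∈ S_a` iff `f(u) ∈ S_c`. -/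
def IsCopyFun (f : ℕ → ℕ) (a : Finset ℕ) (Sa : Set (Finset ℕ)) (c : Finset ℕ)
    (Sc : Set (Finset ℕ)) : Prop :=
  StrictMonoOn f ↑a ∧ Set.MapsTo f ↑a ↑c ∧ ∀ u ⊆ a, (u ∈ Sa ↔ u.image f ∈ Sc)

/-- `d` is (the image of) a copy of `(a,S_a)` inside `(c,S_c)`. -/
def IsCopy (d : Finset ℕ) (a : Finset ℕ) (Sa : Set (Finset ℕ)) (c : Finset ℕ)
    (Sc : Set (Finset ℕ)) : Prop :=
  ∃ f : ℕ → ℕ, IsCopyFun f a Sa c Sc ∧ a.image f = d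

open Finset

attribute [local instance 0] Classical.propDecidable


set_option linter.unusedSectionVars false

namespace NR

/-- Strictly monotone enumeration between equicardinal finsets (target in ℕ). -/
lemma exists_strictMonoOn {α : Type*} [LinearOrder α] (s : Finset α) (t : Finset ℕ)
    (h : s.card = t.card) : ∃ f : α → ℕ, StrictMonoOn f ↑s ∧ s.image f = t := by
  classical
  set f : α → ℕ := fun x =>
    if hx : x ∈ s then t.orderEmbOfFin h.symm ((s.orderIsoOfFin rfl).symm ⟨x, hx⟩) else 0 with hf
  have hmono : StrictMonoOn f ↑s := by
    intro x hx y hy hxy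
    simp only [Finset.mem_coe] at hx hy
    simp only [hf, dif_pos hx, dif_pos hy]
    apply (t.orderEmbOfFin h.symm).strictMono
    exact (OrderIso.lt_iff_lt _).mpr (Subtype.mk_lt_mk.mpr hxy)
  refine ⟨f, hmono, Finset.eq_of_subset_of_card_le ?_ ?_⟩
  · intro y hy
    simp only [Finset.mem_image] at hy
    obtain ⟨x, hx, rfl⟩ := hy
    simp only [hf, dif_pos hx]
    exact Finset.orderEmbOfFin_mem _ _ _
  · rw [Finset.card_image_of_injOn hmono.injOn, h]

/-- Uniqueness of the strictly monotone map with a given image. -/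
lemma strictMonoOn_unique {α β : Type*} [LinearOrder α] [LinearOrder β] {f g : α → β}
    {s : Finset α} (hf : StrictMonoOn f ↑s) (hg : StrictMonoOn g ↑s)
    (h : s.image f = s.image g) : ∀ x ∈ s, f x = g x := by
  classical
  have hcf : (s.image f).card = s.card := Finset.card_image_of_injOn hf.injOn
  set e := s.orderEmbOfFin (rfl : s.card = s.card) with he
  have hes : ∀ i, e i ∈ s := fun i => Finset.orderEmbOfFin_mem _ _ _
  have hF : ∀ (f' : α → β), StrictMonoOn f' ↑s → s.image f' = s.image f →
      ∀ i : Fin s.card, f' (e i) = (s.image f).orderEmbOfFin hcf i := by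
    intro f' hf' him i
    have hsm : StrictMono (fun i => f' (e i)) := fun i j hij =>
      hf' (hes i) (hes j) (e.strictMono hij)
    have hmem : ∀ i, f' (e i) ∈ s.image f := fun i =>
      him ▸ Finset.mem_image_of_mem f' (hes i)
    have := Finset.orderEmbOfFin_unique hcf hmem hsm
    exact congrFun this i
  intro x hx
  have hsur : ∃ i, e i = x := by
    have : x ∈ Set.range e := by rw [Finset.range_orderEmbOfFin]; exact hx
    exact this
  obtain ⟨i, rfl⟩ := hsur
  rw [hF f hf rfl i, hF g hg h.symm i]

/-- Rank embedding of a finset into ℕ. -/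
lemma exists_rank {α : Type*} [LinearOrder α] (W : Finset α) :
    ∃ φ : α → ℕ, StrictMonoOn φ ↑W := by
  classical
  refine ⟨fun x => (W.filter (· < x)).card, fun x hx y hy hxy => ?_⟩
  apply Finset.card_lt_card
  constructor
  · intro z hz
    simp only [Finset.mem_filter] at hz ⊢
    exact ⟨hz.1, hz.2.trans hxy⟩
  · intro hcon
    have : x ∈ W.filter (· < x) := hcon (by simp [Finset.mem_filter, hxy, Finset.mem_coe.mp hx])
    simp at this

/-- weakly monotone + injective on a finset ⇒ strictly monotone -/
lemma strictMonoOn_of_weak {α β : Type*} [LinearOrder α] [LinearOrder β] {f : α → β}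
    {s : Set α} (hw : ∀ x ∈ s, ∀ y ∈ s, x < y → f x ≤ f y)
    (hi : Set.InjOn f s) : StrictMonoOn f s := by
  intro x hx y hy hxy
  rcases lt_or_eq_of_le (hw x hx y hy hxy) with h | h
  · exact h
  · exact absurd (hi hx hy h) (ne_of_lt hxy)


/-- Finite Ramsey theorem for `k`-element subsets, in relative form. -/
theorem ramsey (r : ℕ) (k : ℕ) : ∀ n : ℕ, ∃ N : ℕ, ∀ Z : Finset ℕ, N ≤ Z.card →
    ∀ χ : Finset ℕ → Fin r, ∃ s, s ⊆ Z ∧ s.card = n ∧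
      ∃ c, ∀ u ⊆ s, u.card = k → χ u = c := by
  induction k with
  | zero =>
    intro n
    refine ⟨n, fun Z hZ χ => ?_⟩
    obtain ⟨s, hs, hcard⟩ := Finset.exists_subset_card_eq hZ
    refine ⟨s, hs, hcard, χ ∅, fun u _ hcu => by rw [Finset.card_eq_zero.mp hcu]⟩
  | succ k IH =>
    intro n
    -- key iteration
    have key : ∀ m : ℕ, ∃ N : ℕ, ∀ Z : Finset ℕ, N ≤ Z.card → ∀ χ : Finset ℕ → Fin r,
        ∃ (t : Finset ℕ) (c : ℕ → Fin r) (T : Finset ℕ), t ⊆ Z ∧ T ⊆ Z ∧ t.card = m ∧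
          (∀ x ∈ t, ∀ y ∈ T, x < y) ∧
          (∀ x ∈ t, ∀ u, u ⊆ (t.filter (x < ·)) ∪ T → u.card = k → χ (insert x u) = c x) := by
      intro m
      induction m with
      | zero =>
        refine ⟨0, fun Z _ χ => ?_⟩
        exact ⟨∅, fun _ => χ ∅, Z, by simp, by simp, by simp, by simp, by simp⟩
      | succ m IHm =>
        obtain ⟨N', hN'⟩ := IHm
        obtain ⟨Nk, hNk⟩ := IH N'
        refine ⟨Nk + 1, fun Z hZ χ => ?_⟩
        have hZne : Z.Nonempty := Finset.card_pos.mp (by omega)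
        set x := Z.min' hZne with hx
        have hxZ : x ∈ Z := Z.min'_mem hZne
        have hZ'card : Nk ≤ (Z.erase x).card := by
          rw [Finset.card_erase_of_mem hxZ]; omega
        obtain ⟨T₁, hT₁sub, hT₁card, cx, hmonoT₁⟩ :=
          hNk (Z.erase x) hZ'card (fun u => χ (insert x u))
        obtain ⟨t', c', T, ht'T₁, hTT₁, ht'card, horder, hkey⟩ :=
          hN' T₁ (le_of_eq hT₁card.symm) χ
        have hxlt : ∀ y ∈ T₁, x < y := by
          intro y hy
          have hyZ : y ∈ Z.erase x := hT₁sub hy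
          have : y ≠ x := Finset.ne_of_mem_erase hyZ
          exact lt_of_le_of_ne (Z.min'_le y (Finset.mem_of_mem_erase hyZ)) (Ne.symm this)
        have hxt' : x ∉ t' := fun hc => lt_irrefl x (hxlt x (ht'T₁ hc))
        refine ⟨insert x t', fun y => if y = x then cx else c' y, T,
          ?_, ?_, ?_, ?_, ?_⟩
        · intro y hy
          rcases Finset.mem_insert.mp hy with rfl | hy
          · exact hxZ
          · exact Finset.mem_of_mem_erase (hT₁sub (ht'T₁ hy))
        · exact fun y hy => Finset.mem_of_mem_erase (hT₁sub (hTT₁ hy))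
        · rw [Finset.card_insert_of_notMem hxt', ht'card]
        · intro x' hx' y hy
          rcases Finset.mem_insert.mp hx' with rfl | hx'
          · exact hxlt y (hTT₁ hy)
          · exact horder x' hx' y hy
        · intro x' hx' u hu hcu
          rcases Finset.mem_insert.mp hx' with rfl | hx'
          · have hsub : u ⊆ T₁ := by
              intro z hz
              rcases Finset.mem_union.mp (hu hz) with hz' | hz'
              · have hz'' := Finset.mem_filter.mp hz'
                rcases Finset.mem_insert.mp hz''.1 with hz0 | hz3
                · rw [hz0] at hz''
                  exact absurd hz''.2 (lt_irrefl x)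
                · exact ht'T₁ hz3
              · exact hTT₁ hz'
            beta_reduce
            rw [if_pos rfl]
            exact hmonoT₁ u hsub hcu
          · have hne : x' ≠ x := fun hc => hxt' (hc ▸ hx')
            beta_reduce
            rw [if_neg hne]
            refine hkey x' hx' u ?_ hcu
            intro z hz
            rcases Finset.mem_union.mp (hu hz) with hz' | hz'
            · have hz'' := Finset.mem_filter.mp hz'
              rcases Finset.mem_insert.mp hz''.1 with rfl | hz3
              · exact absurd hz''.2 (not_lt.mpr (le_of_lt (hxlt x' (ht'T₁ hx'))))
              · exact Finset.mem_union_left _ (Finset.mem_filter.mpr ⟨hz3, hz''.2⟩)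
            · exact Finset.mem_union_right _ hz'
    -- pigeonhole
    obtain ⟨N, hN⟩ := key (r * n + 1)
    refine ⟨N, fun Z hZ χ => ?_⟩
    have hrinh : Nonempty (Fin r) := ⟨χ ∅⟩
    obtain ⟨t, c, T, htZ, _, htcard, _, hkeyt⟩ := hN Z hZ χ
    have hcard : (Finset.univ : Finset (Fin r)).card * n < t.card := by
      simp [htcard]
    obtain ⟨c₀, _, hc₀⟩ := Finset.exists_lt_card_fiber_of_mul_lt_card_of_maps_to
      (fun x (_ : x ∈ t) => Finset.mem_univ (c x)) hcard
    obtain ⟨s, hs, hscard⟩ := Finset.exists_subset_card_eq (le_of_lt hc₀)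
    refine ⟨s, fun z hz => htZ (Finset.mem_of_mem_filter z (hs hz)), hscard, c₀, ?_⟩
    intro u hu hcu
    have hune : u.Nonempty := Finset.card_pos.mp (by omega)
    set x := u.min' hune with hxdef
    have hxu : x ∈ u := u.min'_mem hune
    have hxs : x ∈ t.filter (fun y => c y = c₀) := hs (hu hxu)
    have hxt : x ∈ t := Finset.mem_of_mem_filter x hxs
    have hcx : c x = c₀ := (Finset.mem_filter.mp hxs).2
    have herase : insert x (u.erase x) = u := Finset.insert_erase hxu
    have hcard' : (u.erase x).card = k := by
      rw [Finset.card_erase_of_mem hxu, hcu]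
      omega
    have := hkeyt x hxt (u.erase x) ?_ hcard'
    · rw [herase] at this; rw [this, hcx]
    · intro z hz
      apply Finset.mem_union_left
      refine Finset.mem_filter.mpr ⟨Finset.mem_of_mem_filter z (hs (hu (Finset.mem_of_mem_erase hz))), ?_⟩
      exact lt_of_le_of_ne (u.min'_le z (Finset.mem_of_mem_erase hz))
        (Ne.symm (Finset.ne_of_mem_erase hz))


/-! ### Abstract ordered complexes and copies -/

structure Cx (α : Type) [LinearOrder α] : Type where
  verts : Finset α
  faces : Set (Finset α)
  sub : ∀ F ∈ faces, F ⊆ verts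
  her : ∀ F G : Finset α, F ⊆ G → G ∈ faces → F ∈ faces
  sing : ∀ v ∈ verts, ({v} : Finset α) ∈ faces
  empt : (∅ : Finset α) ∈ faces

variable {α β γ δ : Type} [LinearOrder α] [LinearOrder β] [LinearOrder γ] [LinearOrder δ]

def CopyFn (f : α → β) (X : Cx α) (Y : Cx β) : Prop :=
  StrictMonoOn f ↑X.verts ∧ Set.MapsTo f ↑X.verts ↑Y.verts ∧
    ∀ u ⊆ X.verts, (u ∈ X.faces ↔ u.image f ∈ Y.faces)

lemma image_subset_of_mapsTo {f : α → β} {s : Finset α} {t : Finset β} {u : Finset α}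
    (h : Set.MapsTo f ↑s ↑t) (hu : u ⊆ s) : u.image f ⊆ t := by
  intro y hy
  obtain ⟨x, hx, rfl⟩ := Finset.mem_image.mp hy
  exact h (hu hx)

lemma image_cancel {f : α → β} {s : Set α} {u F : Finset α} (hinj : Set.InjOn f s)
    (hu : ↑u ⊆ s) (hF : ↑F ⊆ s) (h : u.image f = F.image f) : u = F := by
  ext x
  constructor
  · intro hx
    have : f x ∈ F.image f := h ▸ Finset.mem_image_of_mem f hx
    obtain ⟨y, hy, hxy⟩ := Finset.mem_image.mp this
    rwa [hinj (hF hy) (hu hx) hxy] at hy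
  · intro hx
    have : f x ∈ u.image f := h.symm ▸ Finset.mem_image_of_mem f hx
    obtain ⟨y, hy, hxy⟩ := Finset.mem_image.mp this
    rwa [hinj (hu hy) (hF hx) hxy] at hy

lemma CopyFn.comp {f : α → β} {g : β → γ} {X : Cx α} {Y : Cx β} {Z : Cx γ}
    (hf : CopyFn f X Y) (hg : CopyFn g Y Z) : CopyFn (g ∘ f) X Z := by
  refine ⟨fun x hx y hy hxy => hg.1 (hf.2.1 hx) (hf.2.1 hy) (hf.1 hx hy hxy),
    hg.2.1.comp hf.2.1, fun u hu => ?_⟩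
  rw [hf.2.2 u hu, hg.2.2 (u.image f) (image_subset_of_mapsTo hf.2.1 hu), Finset.image_image]

lemma CopyFn.restrict {ψ : β → γ} {g : α → γ} {X : Cx α} {Y : Cx β} {Z : Cx γ}
    (hne : Nonempty β) (hψ : CopyFn ψ Y Z) (hg : CopyFn g X Z)
    (hsub : ∀ i ∈ X.verts, ∃ v ∈ Y.verts, ψ v = g i) :
    ∃ g₀ : α → β, CopyFn g₀ X Y ∧ ∀ i ∈ X.verts, ψ (g₀ i) = g i := by
  haveI := hne
  set g₀ : α → β := fun i => Function.invFunOn ψ ↑Y.verts (g i) with hg₀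
  have hex : ∀ i ∈ X.verts, ∃ v ∈ (↑Y.verts : Set β), ψ v = g i := by
    intro i hi; obtain ⟨v, hv, hveq⟩ := hsub i hi; exact ⟨v, hv, hveq⟩
  have heq : ∀ i ∈ X.verts, ψ (g₀ i) = g i := fun i hi => Function.invFunOn_eq (hex i hi)
  have hmem : ∀ i ∈ X.verts, g₀ i ∈ Y.verts := fun i hi => Function.invFunOn_mem (hex i hi)
  have hmono : StrictMonoOn g₀ ↑X.verts := by
    intro i hi j hj hij
    by_contra hcon
    push_neg at hcon
    have h1 : ψ (g₀ j) ≤ ψ (g₀ i) := by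
      rcases lt_or_eq_of_le hcon with h | h
      · exact le_of_lt (hψ.1 (hmem j hj) (hmem i hi) h)
      · rw [h]
    rw [heq i hi, heq j hj] at h1
    exact absurd (hg.1 hi hj hij) (not_lt.mpr h1)
  refine ⟨g₀, ⟨hmono, fun i hi => hmem i hi, fun u hu => ?_⟩, heq⟩
  have himg : (u.image g₀).image ψ = u.image g := by
    rw [Finset.image_image]
    apply Finset.image_congr
    intro i hi
    exact heq i (hu hi)
  rw [hg.2.2 u hu, ← himg, ← hψ.2.2 (u.image g₀) (image_subset_of_mapsTo (fun i hi => hmem i hi) hu)]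

/-- Pushforward of a complex along a map. -/
def Cx.mapc (X : Cx α) (f : α → β) : Cx β where
  verts := X.verts.image f
  faces := {G | ∃ F ∈ X.faces, G = F.image f}
  sub := by
    rintro G ⟨F, hF, rfl⟩
    exact Finset.image_subset_image (X.sub F hF)
  her := by
    classical
    rintro G' G hsub ⟨F, hF, rfl⟩
    refine ⟨F.filter (fun x => f x ∈ G'), X.her _ F (Finset.filter_subset _ _) hF, ?_⟩
    ext y
    simp only [Finset.mem_image, Finset.mem_filter]
    constructor
    · intro hy
      obtain ⟨x, hx, rfl⟩ := Finset.mem_image.mp (hsub hy)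
      exact ⟨x, ⟨hx, hy⟩, rfl⟩
    · rintro ⟨x, ⟨_, hx2⟩, rfl⟩
      exact hx2
  sing := by
    rintro v hv
    obtain ⟨x, hx, rfl⟩ := Finset.mem_image.mp hv
    exact ⟨{x}, X.sing x hx, by simp⟩
  empt := ⟨∅, X.empt, by simp⟩

lemma copyFn_mapc {X : Cx α} {f : α → β} (hmono : StrictMonoOn f ↑X.verts) :
    CopyFn f X (X.mapc f) := by
  refine ⟨hmono, fun x hx => Finset.mem_coe.mpr (Finset.mem_image_of_mem f hx), fun u hu => ?_⟩
  constructor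
  · intro h; exact ⟨u, h, rfl⟩
  · rintro ⟨F, hF, hFeq⟩
    rw [show u = F from image_cancel hmono.injOn (by exact_mod_cast hu)
      (by exact_mod_cast X.sub F hF) hFeq]
    exact hF

/-! ### Polyhedra as complexes; partite pictures -/

def polyCx {a : Finset ℕ} {Sa : Set (Finset ℕ)} (ha : FinOrdPoly a Sa) : Cx ℕ where
  verts := a
  faces := Sa
  sub := fun F hF => ha.2.1 F hF
  her := fun F G h hG => ha.2.2.1 F G h hG
  sing := fun v hv => by
    obtain ⟨u, hu, hvu⟩ := ha.2.2.2 v hv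
    exact ha.2.2.1 {v} u (Finset.singleton_subset_iff.mpr hvu) hu
  empt := by
    obtain ⟨i, hi⟩ := ha.1
    obtain ⟨u, hu, _⟩ := ha.2.2.2 i hi
    exact ha.2.2.1 ∅ u (Finset.empty_subset u) hu

structure Pic : Type 1 where
  carrier : Type
  [lo : LinearOrder carrier]
  cx : Cx carrier
  part : carrier → ℕ
  partMono : ∀ v ∈ cx.verts, ∀ w ∈ cx.verts, v < w → part v ≤ part w
  tv : ∀ F ∈ cx.faces, Set.InjOn part ↑F

attribute [instance] Pic.lo

/-- copy of the complex `A` into the picture `P` whose trace of parts is `s`. -/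
def ACopy (A : Cx ℕ) (P : Pic) (g : ℕ → P.carrier) (s : Finset ℕ) : Prop :=
  CopyFn g A P.cx ∧ A.verts.image (fun i => P.part (g i)) = s ∧
    Set.InjOn (fun i => P.part (g i)) ↑A.verts

/-- part-preserving copy between pictures. -/
def PCopy (P Q : Pic) (ψ : P.carrier → Q.carrier) : Prop :=
  CopyFn ψ P.cx Q.cx ∧ ∀ v ∈ P.cx.verts, Q.part (ψ v) = P.part v

lemma PCopy.comp {P Q R : Pic} {ψ : P.carrier → Q.carrier} {ψ' : Q.carrier → R.carrier}
    (h : PCopy P Q ψ) (h' : PCopy Q R ψ') : PCopy P R (ψ' ∘ ψ) := by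
  refine ⟨h.1.comp h'.1, fun v hv => ?_⟩
  rw [Function.comp_apply, h'.2 (ψ v) (h.1.2.1 hv), h.2 v hv]

lemma ACopy.pcomp {A : Cx ℕ} {P Q : Pic} {g : ℕ → P.carrier} {s : Finset ℕ}
    {ψ : P.carrier → Q.carrier} (hg : ACopy A P g s) (hψ : PCopy P Q ψ) :
    ACopy A Q (ψ ∘ g) s := by
  have hsame : ∀ i ∈ A.verts, Q.part (ψ (g i)) = P.part (g i) := fun i hi =>
    hψ.2 (g i) (hg.1.2.1 hi)
  refine ⟨hg.1.comp hψ.1, ?_, ?_⟩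
  · rw [← hg.2.1]
    apply Finset.image_congr
    intro i hi
    exact hsame i hi
  · intro i hi j hj hij
    simp only [Function.comp_apply] at hij
    rw [hsame i hi, hsame j hj] at hij
    exact hg.2.2 hi hj hij

lemma ACopy.restrict {A : Cx ℕ} {P Q : Pic} {g : ℕ → Q.carrier} {s : Finset ℕ}
    {ψ : P.carrier → Q.carrier} (hne : A.verts.Nonempty) (hψ : PCopy P Q ψ)
    (hg : ACopy A Q g s) (hsub : ∀ i ∈ A.verts, ∃ v ∈ P.cx.verts, ψ v = g i) :
    ∃ g₀, ACopy A P g₀ s ∧ ∀ i ∈ A.verts, ψ (g₀ i) = g i := by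
  have hnecar : Nonempty P.carrier := by
    obtain ⟨i, hi⟩ := hne
    obtain ⟨v, _, _⟩ := hsub i hi
    exact ⟨v⟩
  obtain ⟨g₀, hg₀, heq⟩ := CopyFn.restrict hnecar hψ.1 hg.1 hsub
  have hsame : ∀ i ∈ A.verts, P.part (g₀ i) = Q.part (g i) := by
    intro i hi
    rw [← heq i hi, hψ.2 (g₀ i) (hg₀.2.1 hi)]
  refine ⟨g₀, ⟨hg₀, ?_, ?_⟩, heq⟩
  · rw [← hg.2.1]
    apply Finset.image_congr
    intro i hi
    exact hsame i hi
  · intro i hi j hj hij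
    simp only at hij
    rw [hsame i hi, hsame j hj] at hij
    exact hg.2.2 hi hj hij

/-! ### helpers for lex pairs and images -/

lemma subset_image_filter {A B : Type*} [DecidableEq B] {m : A → B} {F : Finset A} {G : Finset B}
    (h : G ⊆ F.image m) : ∃ F', F' ⊆ F ∧ G = F'.image m := by
  classical
  refine ⟨F.filter (fun x => m x ∈ G), Finset.filter_subset _ _, ?_⟩
  ext y
  simp only [Finset.mem_image, Finset.mem_filter]
  constructor
  · intro hy
    obtain ⟨x, hx, rfl⟩ := Finset.mem_image.mp (h hy)
    exact ⟨x, ⟨hx, hy⟩, rfl⟩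
  · rintro ⟨x, ⟨_, hx2⟩, rfl⟩
    exact hx2

lemma lexlt_iff {A B : Type*} [LinearOrder A] [LinearOrder B] (x y : A ×ₗ B) :
    x < y ↔ (ofLex x).1 < (ofLex y).1 ∨ ((ofLex x).1 = (ofLex y).1 ∧ (ofLex x).2 < (ofLex y).2) :=
  Prod.Lex.lt_iff

lemma lex_fst_le {A B : Type*} [LinearOrder A] [LinearOrder B] {x y : A ×ₗ B}
    (h : x < y) : (ofLex x).1 ≤ (ofLex y).1 := by
  rcases (lexlt_iff x y).mp h with h | ⟨h, _⟩
  · exact le_of_lt h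
  · exact le_of_eq h

lemma lexlt_of_fst {A B : Type*} [LinearOrder A] [LinearOrder B] {x y : A ×ₗ B}
    (h : (ofLex x).1 < (ofLex y).1) : x < y := (lexlt_iff x y).mpr (Or.inl h)

lemma lexlt_of_snd {A B : Type*} [LinearOrder A] [LinearOrder B] {x y : A ×ₗ B}
    (h1 : (ofLex x).1 = (ofLex y).1) (h : (ofLex x).2 < (ofLex y).2) : x < y :=
  (lexlt_iff x y).mpr (Or.inr ⟨h1, h⟩)

/-! ### The base picture `P₀` -/

section P0

variable (b : Finset ℕ) (Sb : Set (Finset ℕ)) (N : ℕ)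

noncomputable def enc : Finset ℕ → ℕ := fun s => Encodable.encode s

lemma enc_inj : Function.Injective enc := Encodable.encode_injective

noncomputable def vmap (f : ℕ → ℕ) : ℕ → ℕ ×ₗ ℕ := fun i => toLex (f i, enc (b.image f))

def okf (f : ℕ → ℕ) : Prop := StrictMonoOn f ↑b ∧ Set.MapsTo f ↑b ↑(Finset.range N)

lemma okf.image_mem {f : ℕ → ℕ} (hf : okf b N f) :
    b.image f ∈ (Finset.range N).powersetCard b.card := by
  rw [Finset.mem_powersetCard]
  exact ⟨image_subset_of_mapsTo hf.2 (le_refl b), Finset.card_image_of_injOn hf.1.injOn⟩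

lemma vmap_inj {f : ℕ → ℕ} (hf : okf b N f) : Set.InjOn (vmap b f) ↑b := by
  intro i hi j hj hij
  have : f i = f j := congrArg (fun v => (ofLex v).1) hij
  exact hf.1.injOn hi hj this

noncomputable def P0verts : Finset (ℕ ×ₗ ℕ) :=
  ((Finset.range N).powersetCard b.card).biUnion
    (fun s => s.image (fun p => toLex (p, enc s)))

lemma vmap_mem {f : ℕ → ℕ} (hf : okf b N f) {i : ℕ} (hi : i ∈ b) :
    vmap b f i ∈ P0verts b N := by
  classical
  rw [P0verts, Finset.mem_biUnion]
  exact ⟨b.image f, hf.image_mem, Finset.mem_image.mpr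
    ⟨f i, Finset.mem_image_of_mem f hi, rfl⟩⟩

def P0faces : Set (Finset (ℕ ×ₗ ℕ)) :=
  {G | ∃ f : ℕ → ℕ, okf b N f ∧ ∃ u ∈ Sb, G = u.image (vmap b f)}

variable {b Sb N} (hb : FinOrdPoly b Sb) (hN : b.card ≤ N)

noncomputable def P0 : Pic where
  carrier := ℕ ×ₗ ℕ
  cx :=
  { verts := P0verts b N
    faces := P0faces b Sb N
    sub := by
      rintro G ⟨f, hf, u, hu, rfl⟩
      intro v hv
      obtain ⟨i, hi, rfl⟩ := Finset.mem_image.mp hv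
      exact vmap_mem b N hf (hb.2.1 u hu hi)
    her := by
      rintro G' G hsub ⟨f, hf, u, hu, rfl⟩
      obtain ⟨u', hu'sub, hG'⟩ := subset_image_filter hsub
      exact ⟨f, hf, u', hb.2.2.1 u' u hu'sub hu, hG'⟩
    sing := by
      intro v hv
      classical
      rw [P0verts, Finset.mem_biUnion] at hv
      obtain ⟨s, hs, hv⟩ := hv
      obtain ⟨p, hp, rfl⟩ := Finset.mem_image.mp hv
      rw [Finset.mem_powersetCard] at hs
      obtain ⟨f, hmono, himg⟩ := exists_strictMonoOn b s hs.2.symm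
      have hok : okf b N f := ⟨hmono, fun i hi => by
        have : f i ∈ s := himg ▸ Finset.mem_image_of_mem f hi
        exact hs.1 this⟩
      have hp' : p ∈ b.image f := himg.symm ▸ hp
      obtain ⟨i, hi, rfl⟩ := Finset.mem_image.mp hp'
      refine ⟨f, hok, {i}, (polyCx hb).sing i hi, ?_⟩
      rw [Finset.image_singleton]
      show ({toLex (f i, enc s)} : Finset _) = {vmap b f i}
      rw [vmap, himg]
    empt := by
      obtain ⟨s, hs, hcard⟩ := Finset.exists_subset_card_eq
        (s := Finset.range N) (n := b.card) (by rw [Finset.card_range]; exact hN)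
      obtain ⟨f, hmono, himg⟩ := exists_strictMonoOn b s hcard.symm
      refine ⟨f, ⟨hmono, fun i hi => hs (by exact himg ▸ Finset.mem_image_of_mem f hi)⟩,
        ∅, (polyCx hb).empt, by simp⟩ }
  part := fun v => (ofLex v).1
  partMono := fun v _ w _ h => lex_fst_le h
  tv := by
    rintro G ⟨f, hf, u, hu, rfl⟩
    intro x hx y hy hxy
    simp only [Finset.coe_image, Set.mem_image] at hx hy
    obtain ⟨i, hi, rfl⟩ := hx
    obtain ⟨j, hj, rfl⟩ := hy
    have : f i = f j := hxy
    rw [vmap_inj b N hf (hb.2.1 u hu hi) (hb.2.1 u hu hj) (by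
      show toLex (f i, _) = toLex (f j, _)
      rw [this])]

lemma P0_bcopy {f : ℕ → ℕ} (hf : okf b N f) :
    ACopy (polyCx hb) (P0 hb hN) (vmap b f) (b.image f) := by
  constructor
  · refine ⟨?_, ?_, ?_⟩
    · intro i hi j hj hij
      apply lexlt_of_fst
      simpa [vmap] using hf.1 hi hj hij
    · intro i hi
      exact vmap_mem b N hf hi
    · intro u hu
      constructor
      · intro huSb
        exact ⟨f, hf, u, huSb, rfl⟩
      · rintro ⟨f', hf', u', hu', heq⟩
        rcases Finset.eq_empty_or_nonempty u' with rfl | ⟨j, hj⟩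
        · simp only [Finset.image_empty] at heq
          have heq := Finset.image_eq_empty.mp heq
          rw [heq]
          exact (polyCx hb).empt
        · have hu'b : u' ⊆ b := hb.2.1 u' hu'
          have hjmem : vmap b f' j ∈ u.image (vmap b f) :=
            heq ▸ Finset.mem_image_of_mem _ hj
          obtain ⟨i, _, hieq⟩ := Finset.mem_image.mp hjmem
          have hencs : enc (b.image f) = enc (b.image f') :=
            congrArg (fun v => (ofLex v).2) hieq
          have himgs : b.image f = b.image f' := enc_inj hencs
          have hfeq : ∀ x ∈ b, f x = f' x := strictMonoOn_unique hf.1 hf'.1 himgs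
          have hveq : ∀ x ∈ b, vmap b f x = vmap b f' x := by
            intro x hx
            rw [vmap, vmap, hfeq x hx, himgs]
          have : u.image (vmap b f) = u'.image (vmap b f) := by
            refine heq.trans ?_
            exact Finset.image_congr (fun x hx => (hveq x (hu'b hx)).symm)
          rw [image_cancel (vmap_inj b N hf) (by exact_mod_cast hu)
            (by exact_mod_cast hu'b) this]
          exact hu'
  · constructor
    · apply Finset.image_congr
      intro i _
      rfl
    · intro i hi j hj hij
      exact hf.1.injOn hi hj hij

end P0

/-! ### lex helper for tuples -/

lemma pi_lex_lt {ι : Type} [LinearOrder ι] [WellFoundedLT ι] {B : Type} [LinearOrder B]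
    {x y : ι → B} (hne : ∃ j, x j ≠ y j) (hle : ∀ j, x j ≠ y j → x j < y j) :
    toLex x < toLex y := by
  obtain ⟨j₀, hj₀⟩ := hne
  have hwf := (IsWellFounded.wf : WellFounded ((· < ·) : ι → ι → Prop))
  set S : Set ι := {j | x j ≠ y j}
  have hSne : j₀ ∈ S := hj₀
  set i := hwf.min S ⟨j₀, hSne⟩ with hi
  have hiS : i ∈ S := hwf.min_mem S ⟨j₀, hSne⟩
  refine ⟨i, fun j hj => ?_, hle i hiS⟩
  by_contra hcon
  exact hwf.not_lt_min S (show j ∈ S from hcon) hj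

/-! ### The amalgamated word picture (partite step) -/

section Step
open Combinatorics

variable (a : Finset ℕ) (Sa : Set (Finset ℕ))
variable (P : Pic) (h : ℕ → ℕ) (s : Finset ℕ)
variable (ι 𝔸 : Type) [LinearOrder ι] [WellFoundedLT ι] [Fintype ι] [Fintype 𝔸]
  [LinearOrder (Line 𝔸 ι)]
variable (D : 𝔸 → ℕ → P.carrier)

lemma copy_part {ha : FinOrdPoly a Sa} {g : ℕ → P.carrier} (hh : StrictMonoOn h ↑a)
    (himg : a.image h = s) (hg : ACopy (polyCx ha) P g s) :
    ∀ i ∈ a, P.part (g i) = h i := by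
  have hw : ∀ x ∈ (↑a : Set ℕ), ∀ y ∈ (↑a : Set ℕ), x < y →
      P.part (g x) ≤ P.part (g y) := fun x hx y hy hxy =>
    P.partMono _ (hg.1.2.1 hx) _ (hg.1.2.1 hy) (hg.1.1 hx hy hxy)
  have hstrict : StrictMonoOn (fun i => P.part (g i)) ↑a := strictMonoOn_of_weak hw hg.2.2
  have himg2 : a.image (fun i => P.part (g i)) = a.image h := by
    have h21 : a.image (fun i => P.part (g i)) = s := hg.2.1
    rw [h21, himg]
  exact strictMonoOn_unique hstrict hh himg2

/-- the carrier type of the step picture -/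
abbrev QT : Type := ℕ ×ₗ ((Lex (ι → P.carrier)) ⊕ₗ ((Line 𝔸 ι) ×ₗ P.carrier))

def mkT (p : ℕ) (x : ι → P.carrier) : QT P ι 𝔸 := toLex (p, toLex (Sum.inl (toLex x)))

def mkL (p : ℕ) (ℓ : Line 𝔸 ι) (v : P.carrier) : QT P ι 𝔸 :=
  toLex (p, toLex (Sum.inr (toLex (ℓ, v))))

def Qpart : QT P ι 𝔸 → ℕ := fun q => (ofLex q).1

lemma mkT_inj {p p' : ℕ} {x x' : ι → P.carrier} (hyp : mkT P ι 𝔸 p x = mkT P ι 𝔸 p' x') :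
    p = p' ∧ x = x' := by
  unfold mkT at hyp
  have h1 := congrArg (fun q => (ofLex q).1) hyp
  have h2 := congrArg (fun q => (ofLex q).2) hyp
  simp only [ofLex_toLex] at h1 h2
  refine ⟨h1, ?_⟩
  have h3 := toLex.injective h2
  have h4 := Sum.inl.inj h3
  exact toLex.injective h4

lemma mkL_inj {p p' : ℕ} {ℓ ℓ' : Line 𝔸 ι} {v v' : P.carrier}
    (hyp : mkL P ι 𝔸 p ℓ v = mkL P ι 𝔸 p' ℓ' v') : p = p' ∧ ℓ = ℓ' ∧ v = v' := by
  unfold mkL at hyp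
  have h1 := congrArg (fun q => (ofLex q).1) hyp
  have h2 := congrArg (fun q => (ofLex q).2) hyp
  simp only [ofLex_toLex] at h1 h2
  have h3 := toLex.injective (Sum.inr.inj (toLex.injective h2))
  exact ⟨h1, congrArg Prod.fst h3, congrArg Prod.snd h3⟩

lemma mkT_ne_mkL {p p' : ℕ} {x : ι → P.carrier} {ℓ : Line 𝔸 ι} {v : P.carrier} :
    mkT P ι 𝔸 p x ≠ mkL P ι 𝔸 p' ℓ v := by
  intro hyp
  unfold mkT mkL at hyp
  have h2 := congrArg (fun q => (ofLex q).2) hyp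
  simp only [ofLex_toLex] at h2
  have h3 := toLex.injective h2
  exact Sum.inl_ne_inr h3

lemma Qpart_mkT (p : ℕ) (x : ι → P.carrier) : Qpart P ι 𝔸 (mkT P ι 𝔸 p x) = p := rfl

lemma Qpart_mkL (p : ℕ) (ℓ : Line 𝔸 ι) (v : P.carrier) :
    Qpart P ι 𝔸 (mkL P ι 𝔸 p ℓ v) = p := rfl

lemma mkT_lt_mkT (p : ℕ) {x y : ι → P.carrier} (hne : ∃ j, x j ≠ y j)
    (hle : ∀ j, x j ≠ y j → x j < y j) : mkT P ι 𝔸 p x < mkT P ι 𝔸 p y := by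
  refine lexlt_of_snd rfl ?_
  show toLex (Sum.inl (toLex x)) < toLex (Sum.inl (toLex y))
  rw [Sum.Lex.inl_lt_inl_iff]
  exact pi_lex_lt hne hle

lemma mkL_lt_mkL (p : ℕ) (ℓ : Line 𝔸 ι) {v v' : P.carrier} (hyp : v < v') :
    mkL P ι 𝔸 p ℓ v < mkL P ι 𝔸 p ℓ v' := by
  refine lexlt_of_snd rfl ?_
  show toLex (Sum.inr (toLex (ℓ, v))) < toLex (Sum.inr (toLex (ℓ, v')))
  rw [Sum.Lex.inr_lt_inr_iff]
  exact lexlt_of_snd (x := toLex (ℓ, v)) (y := toLex (ℓ, v')) rfl hyp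

lemma QT_lt_of_part {q q' : QT P ι 𝔸} (hyp : Qpart P ι 𝔸 q < Qpart P ι 𝔸 q') : q < q' :=
  lexlt_of_fst hyp

/-- whether a part index belongs to the distinguished set of parts -/
def inH (p : ℕ) : Prop := ∃ i ∈ a, h i = p

noncomputable def pidx (p : ℕ) : ℕ :=
  if hp : inH a h p then hp.choose else 0

lemma pidx_spec {p : ℕ} (hp : inH a h p) : pidx a h p ∈ a ∧ h (pidx a h p) = p := by
  rw [pidx, dif_pos hp]
  exact ⟨hp.choose_spec.1, hp.choose_spec.2⟩

lemma pidx_h (hh : StrictMonoOn h ↑a) {i : ℕ} (hi : i ∈ a) : pidx a h (h i) = i := by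
  have hp : inH a h (h i) := ⟨i, hi, rfl⟩
  obtain ⟨hmem, heq⟩ := pidx_spec a h hp
  exact hh.injOn hmem hi heq

/-- the images of picture vertices inside the word picture, one for each line -/
noncomputable def φf (ℓ : Line 𝔸 ι) (v : P.carrier) : QT P ι 𝔸 :=
  if inH a h (P.part v) then
    mkT P ι 𝔸 (P.part v)
      (fun j => (ℓ.idxFun j).casesOn v (fun d => D d (pidx a h (P.part v))))
  else mkL P ι 𝔸 (P.part v) ℓ v

/-- the word copies of the polyhedron `(a, Sa)` -/
noncomputable def fwd (w : ι → 𝔸) (i : ℕ) : QT P ι 𝔸 :=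
  mkT P ι 𝔸 (h i) (fun j => D (w j) i)

lemma Qpart_φf (ℓ : Line 𝔸 ι) (v : P.carrier) :
    Qpart P ι 𝔸 (φf a P h ι 𝔸 D ℓ v) = P.part v := by
  unfold φf
  split <;> rfl

lemma Qpart_fwd (w : ι → 𝔸) (i : ℕ) :
    Qpart P ι 𝔸 (fwd P h ι 𝔸 D w i) = h i := rfl

variable [Fintype (Line 𝔸 ι)]

noncomputable def Qverts : Finset (QT P ι 𝔸) :=
  ((Finset.univ : Finset (ι → 𝔸)).biUnion (fun w => a.image (fwd P h ι 𝔸 D w))) ∪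
  ((Finset.univ : Finset (Line 𝔸 ι)).biUnion (fun ℓ => P.cx.verts.image (φf a P h ι 𝔸 D ℓ)))

lemma φf_mapsto (ℓ : Line 𝔸 ι) : ∀ v ∈ P.cx.verts, φf a P h ι 𝔸 D ℓ v ∈ Qverts a P h ι 𝔸 D := by
  intro v hv
  apply Finset.mem_union_right
  rw [Finset.mem_biUnion]
  exact ⟨ℓ, Finset.mem_univ ℓ, Finset.mem_image_of_mem _ hv⟩

lemma fwd_mapsto (w : ι → 𝔸) : ∀ i ∈ a, fwd P h ι 𝔸 D w i ∈ Qverts a P h ι 𝔸 D := by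
  intro i hi
  apply Finset.mem_union_left
  rw [Finset.mem_biUnion]
  exact ⟨w, Finset.mem_univ w, Finset.mem_image_of_mem _ hi⟩

def Qfaces : Set (Finset (QT P ι 𝔸)) :=
  {G | (G ⊆ Qverts a P h ι 𝔸 D ∧ G.card ≤ 1) ∨
    (∃ (ℓ : Line 𝔸 ι) (F : Finset P.carrier), F ∈ P.cx.faces ∧
      G ⊆ F.image (φf a P h ι 𝔸 D ℓ)) ∨
    (∃ (w : ι → 𝔸) (u : Finset ℕ), u ∈ Sa ∧ G ⊆ u.image (fwd P h ι 𝔸 D w))}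

lemma φf_strictMonoOn (ℓ : Line 𝔸 ι) : StrictMonoOn (φf a P h ι 𝔸 D ℓ) ↑P.cx.verts := by
  intro v hv v' hv' hvv'
  have hple : P.part v ≤ P.part v' := P.partMono v hv v' hv' hvv'
  rcases lt_or_eq_of_le hple with hlt | hpe
  · apply QT_lt_of_part
    rw [Qpart_φf, Qpart_φf]
    exact hlt
  · unfold φf
    rw [← hpe]
    by_cases hin : inH a h (P.part v)
    · rw [if_pos hin, if_pos hin]
      apply mkT_lt_mkT
      · obtain ⟨j₀, hj₀⟩ := ℓ.proper
        exact ⟨j₀, by simp [hj₀, ne_of_lt hvv']⟩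
      · intro j hjne
        cases hj : ℓ.idxFun j with
        | none => simpa [hj] using hvv'
        | some d => simp [hj] at hjne
    · rw [if_neg hin, if_neg hin]
      exact mkL_lt_mkL P ι 𝔸 _ ℓ hvv'

lemma fwd_strictMonoOn (hh : StrictMonoOn h ↑a) (w : ι → 𝔸) :
    StrictMonoOn (fwd P h ι 𝔸 D w) ↑a := by
  intro i hi j hj hij
  apply QT_lt_of_part
  rw [Qpart_fwd, Qpart_fwd]
  exact hh hi hj hij

noncomputable def stepPic (ha : FinOrdPoly a Sa) (hh : StrictMonoOn h ↑a) : Pic where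
  carrier := QT P ι 𝔸
  cx :=
  { verts := Qverts a P h ι 𝔸 D
    faces := Qfaces a Sa P h ι 𝔸 D
    sub := by
      rintro G (⟨hsub, _⟩ | ⟨ℓ, F, hF, hsub⟩ | ⟨w, u, hu, hsub⟩)
      · exact hsub
      · refine hsub.trans ?_
        intro x hx
        obtain ⟨v, hv, rfl⟩ := Finset.mem_image.mp hx
        exact φf_mapsto a P h ι 𝔸 D ℓ v (P.cx.sub F hF hv)
      · refine hsub.trans ?_
        intro x hx
        obtain ⟨i, hi, rfl⟩ := Finset.mem_image.mp hx
        exact fwd_mapsto a P h ι 𝔸 D w i (ha.2.1 u hu hi)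
    her := by
      rintro G' G hsub (⟨hsubv, hcard⟩ | ⟨ℓ, F, hF, hsubf⟩ | ⟨w, u, hu, hsubf⟩)
      · exact Or.inl ⟨hsub.trans hsubv, le_trans (Finset.card_le_card hsub) hcard⟩
      · exact Or.inr (Or.inl ⟨ℓ, F, hF, hsub.trans hsubf⟩)
      · exact Or.inr (Or.inr ⟨w, u, hu, hsub.trans hsubf⟩)
    sing := fun v hv => Or.inl ⟨Finset.singleton_subset_iff.mpr hv, by simp⟩
    empt := Or.inl ⟨Finset.empty_subset _, by simp⟩ }
  part := Qpart P ι 𝔸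
  partMono := fun v _ w _ hvw => lex_fst_le hvw
  tv := by
    rintro G (⟨_, hcard⟩ | ⟨ℓ, F, hF, hsub⟩ | ⟨w, u, hu, hsub⟩)
    · intro x hx y hy _
      exact Finset.card_le_one.mp hcard x (Finset.mem_coe.mp hx) y (Finset.mem_coe.mp hy)
    · intro x hx y hy hxy
      obtain ⟨v, hv, rfl⟩ := Finset.mem_image.mp (hsub (Finset.mem_coe.mp hx))
      obtain ⟨v', hv', rfl⟩ := Finset.mem_image.mp (hsub (Finset.mem_coe.mp hy))
      rw [Qpart_φf, Qpart_φf] at hxy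
      rw [P.tv F hF (Finset.mem_coe.mpr hv) (Finset.mem_coe.mpr hv') hxy]
    · intro x hx y hy hxy
      obtain ⟨i, hi, rfl⟩ := Finset.mem_image.mp (hsub (Finset.mem_coe.mp hx))
      obtain ⟨i', hi', rfl⟩ := Finset.mem_image.mp (hsub (Finset.mem_coe.mp hy))
      rw [Qpart_fwd, Qpart_fwd] at hxy
      rw [hh.injOn (Finset.mem_coe.mpr (ha.2.1 u hu hi))
        (Finset.mem_coe.mpr (ha.2.1 u hu hi')) hxy]

lemma phi_eq_phi {ℓ ω : Line 𝔸 ι} {v v' : P.carrier}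
    (heq : φf a P h ι 𝔸 D ℓ v = φf a P h ι 𝔸 D ω v') :
    P.part v = P.part v' ∧
      ((¬ inH a h (P.part v) ∧ ℓ = ω ∧ v = v') ∨
        (inH a h (P.part v) ∧ ∀ j : ι,
          ((ℓ.idxFun j).casesOn v (fun d => D d (pidx a h (P.part v))) : P.carrier) =
          (ω.idxFun j).casesOn v' (fun d => D d (pidx a h (P.part v))))) := by
  have hp : P.part v = P.part v' := by
    have := congrArg (Qpart P ι 𝔸) heq
    rwa [Qpart_φf, Qpart_φf] at this
  refine ⟨hp, ?_⟩
  unfold φf at heq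
  rw [← hp] at heq
  by_cases hin : inH a h (P.part v)
  · rw [if_pos hin, if_pos hin] at heq
    exact Or.inr ⟨hin, fun j => congrFun (mkT_inj P ι 𝔸 heq).2 j⟩
  · rw [if_neg hin, if_neg hin] at heq
    obtain ⟨_, h2, h3⟩ := mkL_inj P ι 𝔸 heq
    exact Or.inl ⟨hin, h2, h3⟩

lemma fwd_eq_phi {w : ι → 𝔸} {i : ℕ} {ω : Line 𝔸 ι} {v' : P.carrier}
    (heq : fwd P h ι 𝔸 D w i = φf a P h ι 𝔸 D ω v') :
    P.part v' = h i ∧ inH a h (P.part v') ∧ (∀ j : ι,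
      D (w j) i = ((ω.idxFun j).casesOn v' (fun d => D d (pidx a h (h i))) : P.carrier)) := by
  have hp : h i = P.part v' := by
    have := congrArg (Qpart P ι 𝔸) heq
    rwa [Qpart_fwd, Qpart_φf] at this
  unfold fwd φf at heq
  rw [← hp] at heq
  by_cases hin : inH a h (h i)
  · rw [if_pos hin] at heq
    exact ⟨hp.symm, hp ▸ hin, fun j => congrFun (mkT_inj P ι 𝔸 heq).2 j⟩
  · rw [if_neg hin] at heq
    exact absurd heq (mkT_ne_mkL P ι 𝔸)

lemma fwd_eq_fwd {w w' : ι → 𝔸} {i i' : ℕ}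
    (heq : fwd P h ι 𝔸 D w i = fwd P h ι 𝔸 D w' i') : h i = h i' := by
  have := congrArg (Qpart P ι 𝔸) heq
  rwa [Qpart_fwd, Qpart_fwd] at this

lemma phi_face (ha : FinOrdPoly a Sa) (hh : StrictMonoOn h ↑a)
    (hD : ∀ d, ACopy (polyCx ha) P (D d) s) {ℓ : Line 𝔸 ι} {F : Finset P.carrier}
    (hF : F ⊆ P.cx.verts) (hyp : F.image (φf a P h ι 𝔸 D ℓ) ∈ Qfaces a Sa P h ι 𝔸 D) :
    F ∈ P.cx.faces := by
  have hφinj : Set.InjOn (φf a P h ι 𝔸 D ℓ) ↑F :=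
    (φf_strictMonoOn a P h ι 𝔸 D ℓ).injOn.mono (by exact_mod_cast hF)
  rcases hyp with ⟨_, hcard⟩ | ⟨ω, F', hF', hsub⟩ | ⟨w, u, hu, hsub⟩
  · rw [Finset.card_image_of_injOn hφinj] at hcard
    rcases Finset.eq_empty_or_nonempty F with rfl | ⟨v, hv⟩
    · exact P.cx.empt
    · have hFv : F = {v} := Finset.eq_singleton_iff_unique_mem.mpr
        ⟨hv, fun x hx => Finset.card_le_one.mp hcard x hx v hv⟩
      rw [hFv]
      exact P.cx.sing v (hF hv)
  · have hpair : ∀ v ∈ F, ∃ v' ∈ F', φf a P h ι 𝔸 D ℓ v = φf a P h ι 𝔸 D ω v' := by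
      intro v hv
      obtain ⟨v', hv', he⟩ := Finset.mem_image.mp (hsub (Finset.mem_image_of_mem _ hv))
      exact ⟨v', hv', he.symm⟩
    by_cases hmix : ∃ v₀ ∈ F, ¬ inH a h (P.part v₀)
    · obtain ⟨v₀, hv₀F, hv₀⟩ := hmix
      obtain ⟨v₀', _, he₀⟩ := hpair v₀ hv₀F
      obtain ⟨hp₀, hcase₀⟩ := phi_eq_phi a P h ι 𝔸 D he₀
      rcases hcase₀ with ⟨_, rfl, _⟩ | ⟨hin, _⟩
      · refine P.cx.her F F' ?_ hF'
        intro v hv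
        obtain ⟨v', hv', he⟩ := hpair v hv
        obtain ⟨hp, hcase⟩ := phi_eq_phi a P h ι 𝔸 D he
        rcases hcase with ⟨_, _, hvv⟩ | ⟨hin, htup⟩
        · rw [hvv]; exact hv'
        · obtain ⟨j₀, hj₀⟩ := ℓ.proper
          have htj := htup j₀
          rw [hj₀] at htj
          rw [show v = v' from htj]
          exact hv'
      · exact absurd hin hv₀
    · push_neg at hmix
      by_cases hcom : ∃ j, ℓ.idxFun j = none ∧ ω.idxFun j = none
      · obtain ⟨j₁, hj₁l, hj₁w⟩ := hcom
        refine P.cx.her F F' ?_ hF'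
        intro v hv
        obtain ⟨v', hv', he⟩ := hpair v hv
        obtain ⟨hp, hcase⟩ := phi_eq_phi a P h ι 𝔸 D he
        rcases hcase with ⟨hnin, _, _⟩ | ⟨hin, htup⟩
        · exact absurd (hmix v hv) hnin
        · have htj := htup j₁
          rw [hj₁l, hj₁w] at htj
          rw [show v = v' from htj]
          exact hv'
      · push_neg at hcom
        obtain ⟨js, hjs⟩ := ℓ.proper
        obtain ⟨ds, hds⟩ := Option.ne_none_iff_exists'.mp (hcom js hjs)
        obtain ⟨j₀, hj₀⟩ := ω.proper
        have hlj₀ : ℓ.idxFun j₀ ≠ none := fun hc => (hcom j₀ hc) hj₀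
        obtain ⟨d₀, hd₀⟩ := Option.ne_none_iff_exists'.mp hlj₀
        have key : ∀ v ∈ F, v = D ds (pidx a h (P.part v)) ∧
            D d₀ (pidx a h (P.part v)) ∈ F' := by
          intro v hv
          obtain ⟨v', hv', he⟩ := hpair v hv
          obtain ⟨hp, hcase⟩ := phi_eq_phi a P h ι 𝔸 D he
          rcases hcase with ⟨hnin, _, _⟩ | ⟨hin, htup⟩
          · exact absurd (hmix v hv) hnin
          · constructor
            · have htj := htup js
              rw [hjs, hds] at htj
              exact htj
            · have htj := htup j₀
              rw [hd₀, hj₀] at htj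
              have htj' : D d₀ (pidx a h (P.part v)) = v' := htj
              rw [htj']
              exact hv'
        classical
        set t : Finset ℕ := F.image (fun v => pidx a h (P.part v)) with ht
        have hta : t ⊆ a := by
          intro i hi
          obtain ⟨v, hv, rfl⟩ := Finset.mem_image.mp hi
          exact (pidx_spec a h (hmix v hv)).1
        have h1 : t.image (D d₀) ⊆ F' := by
          intro x hx
          obtain ⟨i, hi, rfl⟩ := Finset.mem_image.mp hx
          obtain ⟨v, hv, rfl⟩ := Finset.mem_image.mp hi
          exact (key v hv).2
        have h2 : t ∈ Sa :=
          ((hD d₀).1.2.2 t hta).mpr (P.cx.her _ F' h1 hF')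
        have h3 : F = t.image (D ds) := by
          ext x
          constructor
          · intro hx
            exact Finset.mem_image.mpr ⟨pidx a h (P.part x),
              Finset.mem_image_of_mem _ hx, ((key x hx).1).symm⟩
          · intro hx
            obtain ⟨i, hi, rfl⟩ := Finset.mem_image.mp hx
            obtain ⟨v, hv, rfl⟩ := Finset.mem_image.mp hi
            rw [← (key v hv).1]
            exact hv
        rw [h3]
        exact ((hD ds).1.2.2 t hta).mp h2
  · have hua : u ⊆ a := ha.2.1 u hu
    have hpair : ∀ v ∈ F, ∃ i ∈ u, fwd P h ι 𝔸 D w i = φf a P h ι 𝔸 D ℓ v := by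
      intro v hv
      obtain ⟨i, hi, he⟩ := Finset.mem_image.mp (hsub (Finset.mem_image_of_mem _ hv))
      exact ⟨i, hi, he⟩
    obtain ⟨js, hjs⟩ := ℓ.proper
    have key : ∀ v ∈ F, pidx a h (P.part v) ∈ u ∧ v = D (w js) (pidx a h (P.part v)) := by
      intro v hv
      obtain ⟨i, hi, he⟩ := hpair v hv
      obtain ⟨hp, hin, htup⟩ := fwd_eq_phi a P h ι 𝔸 D he
      have hpi : pidx a h (P.part v) = i := by
        rw [hp, pidx_h a h hh (hua hi)]
      have hvs : D (w js) i = v := by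
        have htj := htup js
        rw [hjs] at htj
        exact htj
      constructor
      · rw [hpi]; exact hi
      · rw [hpi, hvs]
    classical
    set t : Finset ℕ := F.image (fun v => pidx a h (P.part v)) with ht
    have htu : t ⊆ u := by
      intro i hi
      obtain ⟨v, hv, rfl⟩ := Finset.mem_image.mp hi
      exact (key v hv).1
    have hta : t ⊆ a := htu.trans hua
    have h2 : t ∈ Sa := ha.2.2.1 t u htu hu
    have h3 : F = t.image (D (w js)) := by
      ext x
      constructor
      · intro hx
        exact Finset.mem_image.mpr ⟨pidx a h (P.part x),
          Finset.mem_image_of_mem _ hx, ((key x hx).2).symm⟩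
      · intro hx
        obtain ⟨i, hi, rfl⟩ := Finset.mem_image.mp hx
        obtain ⟨v, hv, rfl⟩ := Finset.mem_image.mp hi
        rw [← (key v hv).2]
        exact hv
    rw [h3]
    exact ((hD (w js)).1.2.2 t hta).mp h2

lemma fwd_face (ha : FinOrdPoly a Sa) (hh : StrictMonoOn h ↑a)
    (hD : ∀ d, ACopy (polyCx ha) P (D d) s) {w : ι → 𝔸} {u : Finset ℕ} (hua : u ⊆ a)
    (hyp : u.image (fwd P h ι 𝔸 D w) ∈ Qfaces a Sa P h ι 𝔸 D) : u ∈ Sa := by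
  rcases hyp with ⟨_, hcard⟩ | ⟨ω, F', hF', hsub⟩ | ⟨w', u', hu', hsub⟩
  · have hinj : Set.InjOn (fwd P h ι 𝔸 D w) ↑u :=
      (fwd_strictMonoOn a P h ι 𝔸 D hh w).injOn.mono (by exact_mod_cast hua)
    rw [Finset.card_image_of_injOn hinj] at hcard
    rcases Finset.eq_empty_or_nonempty u with rfl | ⟨i, hi⟩
    · exact (polyCx ha).empt
    · have huv : u = {i} := Finset.eq_singleton_iff_unique_mem.mpr
        ⟨hi, fun x hx => Finset.card_le_one.mp hcard x hx i hi⟩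
      rw [huv]
      exact (polyCx ha).sing i (hua hi)
  · obtain ⟨j₀, hj₀⟩ := ω.proper
    have h1 : u.image (D (w j₀)) ⊆ F' := by
      intro x hx
      obtain ⟨i, hi, rfl⟩ := Finset.mem_image.mp hx
      obtain ⟨v', hv', he⟩ := Finset.mem_image.mp (hsub (Finset.mem_image_of_mem _ hi))
      obtain ⟨hp, hin, htup⟩ := fwd_eq_phi a P h ι 𝔸 D he.symm
      have htj := htup j₀
      rw [hj₀] at htj
      have htj' : D (w j₀) i = v' := htj
      rw [htj']
      exact hv'
    exact ((hD (w j₀)).1.2.2 u hua).mpr (P.cx.her _ F' h1 hF')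
  · have hu'a : u' ⊆ a := ha.2.1 u' hu'
    refine ha.2.2.1 u u' ?_ hu'
    intro i hi
    obtain ⟨i', hi', he⟩ := Finset.mem_image.mp (hsub (Finset.mem_image_of_mem _ hi))
    have hpp : h i' = h i := fwd_eq_fwd P h ι 𝔸 D he
    rw [← hh.injOn (Finset.mem_coe.mpr (hu'a hi')) (Finset.mem_coe.mpr (hua hi)) hpp]
    exact hi'

lemma phi_pcopy (ha : FinOrdPoly a Sa) (hh : StrictMonoOn h ↑a)
    (hD : ∀ d, ACopy (polyCx ha) P (D d) s) (ℓ : Line 𝔸 ι) :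
    PCopy P (stepPic a Sa P h ι 𝔸 D ha hh) (φf a P h ι 𝔸 D ℓ) := by
  refine ⟨⟨φf_strictMonoOn a P h ι 𝔸 D ℓ, fun v hv => φf_mapsto a P h ι 𝔸 D ℓ v hv,
    fun F hFsub => ?_⟩, fun v hv => Qpart_φf a P h ι 𝔸 D ℓ v⟩
  constructor
  · intro hFf
    exact Or.inr (Or.inl ⟨ℓ, F, hFf, subset_rfl⟩)
  · intro hyp
    exact phi_face a Sa P h s ι 𝔸 D ha hh hD hFsub hyp

lemma fwd_acopy (ha : FinOrdPoly a Sa) (hh : StrictMonoOn h ↑a) (himg : a.image h = s)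
    (hD : ∀ d, ACopy (polyCx ha) P (D d) s) (w : ι → 𝔸) :
    ACopy (polyCx ha) (stepPic a Sa P h ι 𝔸 D ha hh) (fwd P h ι 𝔸 D w) s := by
  refine ⟨⟨fwd_strictMonoOn a P h ι 𝔸 D hh w, fun i hi => fwd_mapsto a P h ι 𝔸 D w i hi,
    fun u hu => ?_⟩, ?_, ?_⟩
  · constructor
    · intro huSa
      exact Or.inr (Or.inr ⟨w, u, huSa, subset_rfl⟩)
    · intro hyp
      exact fwd_face a Sa P h s ι 𝔸 D ha hh hD hu hyp
  · show a.image (fun i => Qpart P ι 𝔸 (fwd P h ι 𝔸 D w i)) = s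
    rw [show a.image (fun i => Qpart P ι 𝔸 (fwd P h ι 𝔸 D w i))
      = a.image h from Finset.image_congr (fun i _ => rfl)]
    exact himg
  · intro i hi j hj hij
    exact hh.injOn hi hj hij

lemma phi_line (hh : StrictMonoOn h ↑a) (hDp : ∀ d, ∀ i ∈ a, P.part (D d i) = h i)
    (ℓ : Line 𝔸 ι) (d : 𝔸) : ∀ i ∈ a,
    φf a P h ι 𝔸 D ℓ (D d i) = fwd P h ι 𝔸 D (fun j => (ℓ.idxFun j).getD d) i := by
  intro i hi
  have hp : P.part (D d i) = h i := hDp d i hi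
  unfold φf fwd
  rw [hp, if_pos (show inH a h (h i) from ⟨i, hi, rfl⟩)]
  refine congrArg (mkT P ι 𝔸 (h i)) ?_
  funext j
  cases hj : ℓ.idxFun j with
  | none => simp [hj]
  | some d' => simp [hj, pidx_h a h hh hi]

end Step

open Combinatorics in
theorem step {a : Finset ℕ} {Sa : Set (Finset ℕ)} (ha : FinOrdPoly a Sa) (P : Pic)
    (s : Finset ℕ) (hcard : s.card = a.card) (r : ℕ) :
    ∃ Q : Pic, ∀ χ : Finset Q.carrier → Fin r,
      ∃ ψ : P.carrier → Q.carrier, PCopy P Q ψ ∧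
        ∀ g g' : ℕ → Q.carrier, ACopy (polyCx ha) Q g s → ACopy (polyCx ha) Q g' s →
          (∀ i ∈ a, ∃ v ∈ P.cx.verts, ψ v = g i) →
          (∀ i ∈ a, ∃ v ∈ P.cx.verts, ψ v = g' i) →
          χ (a.image g) = χ (a.image g') := by
  classical
  obtain ⟨h, hh, himg⟩ := exists_strictMonoOn a s hcard.symm
  set A0 : Finset (Finset P.carrier) :=
    P.cx.verts.powerset.filter (fun d => ∃ g, ACopy (polyCx ha) P g s ∧ a.image g = d) with hA0
  by_cases hA0e : A0 = ∅
  · refine ⟨P, fun χ => ⟨id, ?_, ?_⟩⟩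
    · exact ⟨⟨fun x _ y _ hxy => hxy, fun x hx => hx, fun u _ => by rw [Finset.image_id]⟩,
        fun v _ => rfl⟩
    · intro g g' hg hg' _ _
      exfalso
      have hmem : a.image g ∈ A0 := by
        rw [hA0, Finset.mem_filter, Finset.mem_powerset]
        exact ⟨image_subset_of_mapsTo hg.1.2.1 (by exact subset_rfl), g, hg, rfl⟩
      rw [hA0e] at hmem
      exact absurd hmem (Finset.notMem_empty _)
  · set 𝔸 : Type := {d : Finset P.carrier // d ∈ A0} with h𝔸
    haveI : Fintype 𝔸 := FinsetCoe.fintype A0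
    have hch : ∀ d : 𝔸, ∃ g, ACopy (polyCx ha) P g s ∧ a.image g = d.1 := fun d =>
      (Finset.mem_filter.mp d.2).2
    set D : 𝔸 → ℕ → P.carrier := fun d => (hch d).choose with hD0
    have hD : ∀ d, ACopy (polyCx ha) P (D d) s := fun d => (hch d).choose_spec.1
    have hDim : ∀ d : 𝔸, a.image (D d) = d.1 := fun d => (hch d).choose_spec.2
    have hDp : ∀ d : 𝔸, ∀ i ∈ a, P.part (D d i) = h i := fun d =>
      copy_part a Sa P h s hh himg (hD d)
    obtain ⟨ι, ιfin, hHJ⟩ := Line.exists_mono_in_high_dimension 𝔸 (Fin r)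
    haveI : Fintype ι := ιfin
    letI : LinearOrder ι := LinearOrder.lift' (Fintype.equivFin ι) (Fintype.equivFin ι).injective
    haveI : WellFoundedLT ι := Finite.to_wellFoundedLT
    haveI : Finite (Line 𝔸 ι) := Finite.of_injective (fun l => l.idxFun)
      (fun l m hyp => by cases l; cases m; simpa using hyp)
    haveI : Fintype (Line 𝔸 ι) := Fintype.ofFinite _
    letI : LinearOrder (Line 𝔸 ι) :=
      LinearOrder.lift' (Fintype.equivFin (Line 𝔸 ι)) (Fintype.equivFin (Line 𝔸 ι)).injective
    refine ⟨stepPic a Sa P h ι 𝔸 D ha hh, fun χ => ?_⟩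
    set C : (ι → 𝔸) → Fin r := fun w => χ (a.image (fwd P h ι 𝔸 D w)) with hC
    obtain ⟨ℓ, hm⟩ := hHJ C
    obtain ⟨c, hc⟩ := hm
    refine ⟨φf a P h ι 𝔸 D ℓ, phi_pcopy a Sa P h s ι 𝔸 D ha hh hD ℓ, ?_⟩
    have hval : ∀ g₁ : ℕ → (stepPic a Sa P h ι 𝔸 D ha hh).carrier,
        ACopy (polyCx ha) (stepPic a Sa P h ι 𝔸 D ha hh) g₁ s →
        (∀ i ∈ a, ∃ v ∈ P.cx.verts, φf a P h ι 𝔸 D ℓ v = g₁ i) →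
        χ (a.image g₁) = c := by
      intro g₁ hg₁ hsub₁
      obtain ⟨g₀, hg₀, heq₀⟩ := ACopy.restrict ha.1
        (phi_pcopy a Sa P h s ι 𝔸 D ha hh hD ℓ) hg₁ hsub₁
      have hd : a.image g₀ ∈ A0 := by
        rw [hA0, Finset.mem_filter, Finset.mem_powerset]
        exact ⟨image_subset_of_mapsTo hg₀.1.2.1 (by exact subset_rfl), g₀, hg₀, rfl⟩
      set d : 𝔸 := ⟨a.image g₀, hd⟩ with hdd
      have h1 : a.image g₁ = (a.image g₀).image (φf a P h ι 𝔸 D ℓ) := by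
        rw [Finset.image_image]
        exact Finset.image_congr (fun i hi => (heq₀ i hi).symm)
      have hchain : a.image g₁ = a.image (fwd P h ι 𝔸 D (fun j => (ℓ.idxFun j).getD d)) := by
        rw [h1, show a.image g₀ = a.image (D d) from (hDim d).symm, Finset.image_image]
        exact Finset.image_congr (fun i hi => phi_line a P h ι 𝔸 D hh hDp ℓ d i hi)
      rw [hchain]
      exact hc d
    intro g g' hg hg' hsubg hsubg'
    rw [hval g hg hsubg, hval g' hg' hsubg']

/-! ### Iterating the step over all possible part-sets -/

lemma PCopy.id (P : Pic) : PCopy P P id :=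
  ⟨⟨fun x _ y _ hxy => hxy, fun x hx => hx, fun u _ => by rw [Finset.image_id]⟩,
    fun v _ => rfl⟩

theorem chain {a : Finset ℕ} {Sa : Set (Finset ℕ)} (ha : FinOrdPoly a Sa) (r : ℕ)
    (L : List (Finset ℕ)) (hL : ∀ s ∈ L, s.card = a.card) (P0 : Pic) :
    ∃ C : Pic, ∀ χ : Finset C.carrier → Fin r,
      ∃ θ : P0.carrier → C.carrier, PCopy P0 C θ ∧
        ∀ s ∈ L, ∀ g g' : ℕ → C.carrier,
          ACopy (polyCx ha) C g s → ACopy (polyCx ha) C g' s →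
          (∀ i ∈ a, ∃ v ∈ P0.cx.verts, θ v = g i) →
          (∀ i ∈ a, ∃ v ∈ P0.cx.verts, θ v = g' i) →
          χ (a.image g) = χ (a.image g') := by
  induction L with
  | nil =>
    exact ⟨P0, fun χ => ⟨id, PCopy.id P0, fun s hs => absurd hs List.not_mem_nil⟩⟩
  | cons s L IH =>
    obtain ⟨C', hC'⟩ := IH (fun s' hs' => hL s' (List.mem_cons_of_mem _ hs'))
    obtain ⟨Q, hQ⟩ := step ha C' s (hL s List.mem_cons_self) r
    refine ⟨Q, fun χ => ?_⟩
    obtain ⟨ψ, hψ, hmono⟩ := hQ χ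
    obtain ⟨θ', hθ', hrec⟩ := hC' (fun G => χ (G.image ψ))
    refine ⟨ψ ∘ θ', hθ'.comp hψ, ?_⟩
    intro s'' hs'' g g' hg hg' hsub hsub'
    have hlift : ∀ (g₁ : ℕ → Q.carrier), (∀ i ∈ a, ∃ v ∈ P0.cx.verts, (ψ ∘ θ') v = g₁ i) →
        (∀ i ∈ a, ∃ v ∈ C'.cx.verts, ψ v = g₁ i) := by
      intro g₁ hyp i hi
      obtain ⟨v, hv, he⟩ := hyp i hi
      exact ⟨θ' v, hθ'.1.2.1 hv, he⟩
    rcases List.mem_cons.mp hs'' with rfl | hs''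
    · exact hmono g g' hg hg' (hlift g hsub) (hlift g' hsub')
    · obtain ⟨g₀, hg₀, heq₀⟩ := ACopy.restrict ha.1 hψ hg (hlift g hsub)
      obtain ⟨g₀', hg₀', heq₀'⟩ := ACopy.restrict ha.1 hψ hg' (hlift g' hsub')
      have hsub₀ : ∀ i ∈ a, ∃ v ∈ P0.cx.verts, θ' v = g₀ i := by
        intro i hi
        obtain ⟨v, hv, he⟩ := hsub i hi
        refine ⟨v, hv, ?_⟩
        apply hψ.1.1.injOn (hθ'.1.2.1 hv) (hg₀.1.2.1 hi)
        rw [heq₀ i hi]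
        exact he
      have hsub₀' : ∀ i ∈ a, ∃ v ∈ P0.cx.verts, θ' v = g₀' i := by
        intro i hi
        obtain ⟨v, hv, he⟩ := hsub' i hi
        refine ⟨v, hv, ?_⟩
        apply hψ.1.1.injOn (hθ'.1.2.1 hv) (hg₀'.1.2.1 hi)
        rw [heq₀' i hi]
        exact he
      have hkey := hrec s'' hs'' g₀ g₀' hg₀ hg₀' hsub₀ hsub₀'
      have him : (a.image g₀).image ψ = a.image g := by
        rw [Finset.image_image]
        exact Finset.image_congr (fun i hi => heq₀ i hi)
      have him' : (a.image g₀').image ψ = a.image g' := by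
        rw [Finset.image_image]
        exact Finset.image_congr (fun i hi => heq₀' i hi)
      rw [← him, ← him']
      exact hkey

/-! ### Final assembly -/

theorem main (a b : Finset ℕ) (Sa Sb : Set (Finset ℕ))
    (ha : FinOrdPoly a Sa) (hb : FinOrdPoly b Sb)
    (hab : ∃ d : Finset ℕ, IsCopy d a Sa b Sb) (r : ℕ) (hr : 1 ≤ r) :
    ∃ (c : Finset ℕ) (Sc : Set (Finset ℕ)), FinOrdPoly c Sc ∧
      ∀ χ : Finset ℕ → Fin r, ∃ e : Finset ℕ, IsCopy e b Sb c Sc ∧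
        ∀ d d' : Finset ℕ, IsCopy d a Sa c Sc → IsCopy d' a Sa c Sc →
          d ⊆ e → d' ⊆ e → χ d = χ d' := by
  classical
  obtain ⟨N₀, hN₀⟩ := ramsey r a.card b.card
  set M := max N₀ b.card with hM
  have hMb : b.card ≤ M := le_max_right _ _
  set P₀ := P0 (b := b) (Sb := Sb) (N := M) hb hMb with hP₀
  set L := ((Finset.range M).powersetCard a.card).toList with hLdef
  have hL : ∀ s ∈ L, s.card = a.card := by
    intro s hs
    rw [hLdef, Finset.mem_toList, Finset.mem_powersetCard] at hs
    exact hs.2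
  obtain ⟨C, hC⟩ := chain ha r L hL P₀
  obtain ⟨φ, hφ⟩ := exists_rank C.cx.verts
  set Ccx := C.cx.mapc φ with hCcx
  have hcopyφ : CopyFn φ C.cx Ccx := copyFn_mapc hφ
  have hCne : C.cx.verts.Nonempty := by
    obtain ⟨θ, hθ, _⟩ := hC (fun _ => ⟨0, hr⟩)
    obtain ⟨sb, hsb, hsbcard⟩ := Finset.exists_subset_card_eq
      (s := Finset.range M) (n := b.card) (by rw [Finset.card_range]; exact hMb)
    obtain ⟨f, hf, hfimg⟩ := exists_strictMonoOn b sb hsbcard.symm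
    have hok : okf b M f := ⟨hf, fun i hi => hsb (by
      exact hfimg ▸ Finset.mem_image_of_mem f hi)⟩
    obtain ⟨i₀, hi₀⟩ := hb.1
    exact ⟨θ (vmap b f i₀), hθ.1.2.1 (vmap_mem b M hok hi₀)⟩
  haveI hCcar : Nonempty C.carrier := ⟨hCne.choose⟩
  refine ⟨Ccx.verts, Ccx.faces, ⟨?_, Ccx.sub, Ccx.her, ?_⟩, ?_⟩
  · obtain ⟨v, hv⟩ := hCne
    exact ⟨φ v, Finset.mem_image_of_mem φ hv⟩
  · intro i hi
    exact ⟨{i}, Ccx.sing i hi, Finset.mem_singleton_self i⟩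
  · intro χ
    obtain ⟨θ, hθ, hrec⟩ := hC (fun G => χ (G.image φ))
    set cc : Finset ℕ → Fin r := fun t =>
      if hex : ∃ g, ACopy (polyCx ha) C g t ∧ (∀ i ∈ a, ∃ v ∈ P₀.cx.verts, θ v = g i) then
        χ ((a.image hex.choose).image φ) else ⟨0, hr⟩ with hccdef
    obtain ⟨st, hstZ, hstcard, c₀, hst⟩ := hN₀ (Finset.range M)
      (by rw [Finset.card_range]; exact le_max_left _ _) cc
    obtain ⟨f, hf, hfimg⟩ := exists_strictMonoOn b st hstcard.symm
    have hok : okf b M f := ⟨hf, fun i hi => hstZ (by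
      exact hfimg ▸ Finset.mem_image_of_mem f hi)⟩
    have hbc := P0_bcopy hb hMb hok
    set F : ℕ → ℕ := fun i => φ (θ (vmap b f i)) with hFdef
    have hFcopy : CopyFn F (polyCx hb) Ccx := (hbc.1.comp hθ.1).comp hcopyφ
    refine ⟨b.image F, ⟨F, hFcopy, rfl⟩, ?_⟩
    have hmain : ∀ d₀ : Finset ℕ, IsCopy d₀ a Sa Ccx.verts Ccx.faces → d₀ ⊆ b.image F →
        ∃ t, t ⊆ st ∧ t.card = a.card ∧ χ d₀ = cc t := by
      intro d₀ hd₀ hsubd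
      obtain ⟨f₁, hf₁, hf₁img⟩ := hd₀
      have hf₁copy : CopyFn f₁ (polyCx ha) Ccx := hf₁
      obtain ⟨g₁, hg₁, heq₁⟩ := CopyFn.restrict hCcar hcopyφ hf₁copy (by
        intro i hi
        have hmem : f₁ i ∈ Ccx.verts := hf₁copy.2.1 hi
        obtain ⟨v, hv, he⟩ := Finset.mem_image.mp hmem
        exact ⟨v, hv, he⟩)
      have hwit : ∀ i ∈ a, ∃ x ∈ b, θ (vmap b f x) = g₁ i := by
        intro i hi
        have hmem : f₁ i ∈ b.image F := by
          apply hsubd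
          rw [← hf₁img]
          exact Finset.mem_image_of_mem f₁ hi
        obtain ⟨x, hx, hxe⟩ := Finset.mem_image.mp hmem
        refine ⟨x, hx, ?_⟩
        apply hφ.injOn (Finset.mem_coe.mpr (hθ.1.2.1 (vmap_mem b M hok hx)))
          (hg₁.2.1 hi)
        show φ (θ (vmap b f x)) = φ (g₁ i)
        rw [heq₁ i hi]
        exact hxe
      have hliftθ : ∀ i ∈ a, ∃ v ∈ P₀.cx.verts, θ v = g₁ i := by
        intro i hi
        obtain ⟨x, hx, he⟩ := hwit i hi
        exact ⟨vmap b f x, vmap_mem b M hok hx, he⟩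
      obtain ⟨g₂, hg₂, heq₂⟩ := CopyFn.restrict (⟨toLex (0,0)⟩ : Nonempty (ℕ ×ₗ ℕ))
        hθ.1 hg₁ hliftθ
      obtain ⟨σ, hσ, heq₃⟩ := CopyFn.restrict (⟨0⟩ : Nonempty ℕ) hbc.1 hg₂ (by
        intro i hi
        obtain ⟨x, hx, he⟩ := hwit i hi
        refine ⟨x, hx, ?_⟩
        apply hθ.1.1.injOn (Finset.mem_coe.mpr (vmap_mem b M hok hx)) (hg₂.2.1 hi)
        show θ (vmap b f x) = θ (g₂ i)
        rw [heq₂ i hi]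
        exact he)
      have hparts : ∀ i ∈ a, C.part (g₁ i) = f (σ i) := by
        intro i hi
        rw [← heq₂ i hi, hθ.2 _ (Finset.mem_coe.mp (hg₂.2.1 hi)), ← heq₃ i hi]
        rfl
      set t : Finset ℕ := a.image (fun i => C.part (g₁ i)) with htdef
      have htst : t ⊆ st := by
        intro p hp
        obtain ⟨i, hi, rfl⟩ := Finset.mem_image.mp hp
        rw [hparts i hi]
        exact hfimg ▸ Finset.mem_image_of_mem f (hσ.2.1 hi)
      have hinj : Set.InjOn (fun i => C.part (g₁ i)) ↑a := by
        intro i hi j hj hij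
        simp only at hij
        rw [hparts i (Finset.mem_coe.mp hi), hparts j (Finset.mem_coe.mp hj)] at hij
        exact hσ.1.injOn hi hj (hf.injOn (hσ.2.1 hi) (hσ.2.1 hj) hij)
      have htcard : t.card = a.card := Finset.card_image_of_injOn hinj
      have hACopy : ACopy (polyCx ha) C g₁ t := ⟨hg₁, rfl, hinj⟩
      have hex : ∃ g, ACopy (polyCx ha) C g t ∧
          (∀ i ∈ a, ∃ v ∈ P₀.cx.verts, θ v = g i) := ⟨g₁, hACopy, hliftθ⟩
      have htL : t ∈ L := by
        rw [hLdef, Finset.mem_toList, Finset.mem_powersetCard]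
        exact ⟨htst.trans hstZ, htcard⟩
      have him : (a.image g₁).image φ = d₀ := by
        rw [Finset.image_image, ← hf₁img]
        exact Finset.image_congr (fun i hi => heq₁ i hi)
      have hccval : cc t = χ d₀ := by
        rw [hccdef]
        beta_reduce
        rw [dif_pos hex]
        have hspec := hex.choose_spec
        have hr2 := hrec t htL hex.choose g₁ hspec.1 hACopy hspec.2 hliftθ
        calc χ ((a.image hex.choose).image φ) = χ ((a.image g₁).image φ) := hr2
          _ = χ d₀ := by rw [him]
      exact ⟨t, htst, htcard, hccval.symm⟩
    intro d d' hd hd' hde hde'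
    obtain ⟨t, htst, htc, hχd⟩ := hmain d hd hde
    obtain ⟨t', htst', htc', hχd'⟩ := hmain d' hd' hde'
    rw [hχd, hχd', hst t htst htc, hst t' htst' htc']

end NR


/-- Ramsey property for the class of finite ordered polyhedra: if `(a,S_a)` has a copy
inside `(b,S_b)` then for every `r ≥ 1` there is a finite ordered polyhedron `(c,S_c)`
such that for every `r`-coloring of the copies of `(a,S_a)` inside `(c,S_c)` there is a
copy of `(b,S_b)` inside `(c,S_c)` all of whose copies of `(a,S_a)` get the same color. -/
theorem finOrdPoly_ramsey_class (a b : Finset ℕ) (Sa Sb : Set (Finset ℕ))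
    (ha : FinOrdPoly a Sa) (hb : FinOrdPoly b Sb)
    (hab : ∃ d : Finset ℕ, IsCopy d a Sa b Sb) (r : ℕ) (hr : 1 ≤ r) :
    ∃ (c : Finset ℕ) (Sc : Set (Finset ℕ)), FinOrdPoly c Sc ∧
      ∀ χ : Finset ℕ → Fin r, ∃ e : Finset ℕ, IsCopy e b Sb c Sc ∧
        ∀ d d' : Finset ℕ, IsCopy d a Sa c Sc → IsCopy d' a Sa c Sc →
          d ⊆ e → d' ⊆ e → χ d = χ d' :=
  NR.main a b Sa Sb ha hb hab r hr
end

section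
/- The Fraïssé limit of the class of finite ordered polyhedra is order-isomorphic to the rationals: let V be a countably infinite set, < a linear order on V, and S a hereditary collection of finite subsets of V with ⋃S = V, such that 𝔽 = (V,<,S) is ultrahomogeneous and every finite ordered polyhedron is isomorphic to a finite substructure of 𝔽. Then the linear order (V,<) is order-isomorphic to (ℚ,≤). -/
open Set

/-- If `𝔽 = (V, <, S)` is an ordered polyhedron on a countably infinite linearly ordered
vertex set `V` (`S` a hereditary family of finite subsets of `V` with `⋃ S = V`) which is
ultrahomogeneous and whose age is the class of all finite ordered polyhedra, then the
linear order `(V, <)` is order-isomorphic to `(ℚ, ≤)`. -/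
theorem fraisseLimit_orderIso_rat (V : Type) [Countable V] [Infinite V] [LinearOrder V]
    (S : Set (Set V))
    (hFin : ∀ u ∈ S, u.Finite)
    (hHered : ∀ u v : Set V, u ⊆ v → v ∈ S → u ∈ S)
    (hCover : ∀ x : V, ∃ u ∈ S, x ∈ u)
    -- ultrahomogeneity: every isomorphism between finite substructures extends to an
    -- automorphism of `𝔽`
    (hUltra : ∀ (W W' : Set V), W.Finite → W'.Finite → ∀ h : V → V,
      Set.BijOn h W W' → StrictMonoOn h W →
      (∀ u : Set V, u ⊆ W → (u ∈ S ↔ h '' u ∈ S)) →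
      ∃ g : V ≃ V, StrictMono g ∧ (∀ u : Set V, u.Finite → (u ∈ S ↔ ⇑g '' u ∈ S)) ∧
        ∀ x ∈ W, g x = h x)
    -- the age of `𝔽` is the class of all finite ordered polyhedra
    (hAge : ∀ (a : Finset ℕ) (Sa : Set (Finset ℕ)), FinOrdPoly a Sa →
      ∃ f : ℕ → V, StrictMonoOn f ↑a ∧ ∀ u ⊆ a, (u ∈ Sa ↔ f '' ↑u ∈ S)) :
    Nonempty (V ≃o ℚ) := by
  classical
  -- every singleton is in S
  have hSingle : ∀ x : V, ({x} : Set V) ∈ S := by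
    intro x
    obtain ⟨u, hu, hxu⟩ := hCover x
    exact hHered _ _ (singleton_subset_iff.mpr hxu) hu
  have hEmpty : (∅ : Set V) ∈ S := by
    obtain ⟨u, hu, -⟩ := hCover (Classical.arbitrary V)
    exact hHered _ _ (empty_subset u) hu
  -- we can move any point to any other point by an automorphism
  have hmove : ∀ x t : V, ∃ g : V ≃ V, StrictMono g ∧ g x = t := by
    intro x t
    set h : V → V := fun z => if z = x then t else z with hh
    have hx : h x = t := if_pos rfl
    have hbij : Set.BijOn h {x} {t} := by
      refine ⟨?_, ?_, ?_⟩
      · intro z hz; rw [mem_singleton_iff] at hz; subst hz; simp [hx]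
      · intro a ha b hb _; rw [mem_singleton_iff] at ha hb; rw [ha, hb]
      · intro z hz; rw [mem_singleton_iff] at hz; exact ⟨x, rfl, by rw [hx, hz]⟩
    have hmono : StrictMonoOn h {x} := by
      intro a ha b hb hab
      rw [mem_singleton_iff] at ha hb
      subst ha; subst hb; exact absurd hab (lt_irrefl _)
    have hiso : ∀ u : Set V, u ⊆ {x} → (u ∈ S ↔ h '' u ∈ S) := by
      intro u hu
      rcases subset_singleton_iff_eq.mp hu with rfl | rfl
      · simp
      · rw [image_singleton, hx]
        simp [hSingle]
    obtain ⟨g, hg, -, hgx⟩ := hUltra {x} {t} (finite_singleton x) (finite_singleton t)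
      h hbij hmono hiso
    exact ⟨g, hg, by rw [hgx x rfl, hx]⟩
  -- two comparable points
  obtain ⟨a0, b0, hab0⟩ : ∃ a b : V, a < b := by
    obtain ⟨a, b, hne⟩ := Nontrivial.exists_pair_ne (α := V)
    rcases hne.lt_or_gt with h | h
    · exact ⟨a, b, h⟩
    · exact ⟨b, a, h⟩
  haveI : NoMaxOrder V := by
    constructor
    intro x
    obtain ⟨g, hg, hgx⟩ := hmove x a0
    refine ⟨g.symm b0, ?_⟩
    rw [← hg.lt_iff_lt, hgx, g.apply_symm_apply]
    exact hab0
  haveI : NoMinOrder V := by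
    constructor
    intro x
    obtain ⟨g, hg, hgx⟩ := hmove x b0
    refine ⟨g.symm a0, ?_⟩
    rw [← hg.lt_iff_lt, hgx, g.apply_symm_apply]
    exact hab0
  haveI : DenselyOrdered V := by
    constructor
    intro x y hxy
    have hne : y ≠ x := (hxy.ne).symm
    -- build a 3-point polyhedron matching S on {x, y}
    set Sa : Set (Finset ℕ) :=
      {u | u ⊆ ({0, 1, 2} : Finset ℕ) ∧ (({x, y} : Set V) ∈ S ∨ ¬(0 ∈ u ∧ 2 ∈ u))} with hSa
    have hpoly : FinOrdPoly ({0, 1, 2} : Finset ℕ) Sa := by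
      refine ⟨⟨0, by decide⟩, fun u hu => hu.1, ?_, ?_⟩
      · intro u v huv hv
        refine ⟨huv.trans hv.1, ?_⟩
        rcases hv.2 with h | h
        · exact Or.inl h
        · exact Or.inr fun ⟨h0, h2⟩ => h ⟨huv h0, huv h2⟩
      · intro i hi
        refine ⟨{i}, ⟨?_, Or.inr ?_⟩, Finset.mem_singleton_self i⟩
        · simpa using hi
        · rintro ⟨h0, h2⟩
          rw [Finset.mem_singleton] at h0 h2
          omega
    obtain ⟨f, hf, hfiso⟩ := hAge _ _ hpoly
    set p := f 0 with hp
    set q := f 1 with hq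
    set r := f 2 with hr
    have h0m : (0 : ℕ) ∈ (↑({0,1,2} : Finset ℕ) : Set ℕ) := by simp
    have h1m : (1 : ℕ) ∈ (↑({0,1,2} : Finset ℕ) : Set ℕ) := by simp
    have h2m : (2 : ℕ) ∈ (↑({0,1,2} : Finset ℕ) : Set ℕ) := by simp
    have hpq : p < q := hf h0m h1m (by omega)
    have hqr : q < r := hf h1m h2m (by omega)
    have hpr : p < r := hpq.trans hqr
    have hpair : (({x, y} : Set V) ∈ S ↔ ({p, r} : Set V) ∈ S) := by
      have := hfiso ({0, 2} : Finset ℕ) (by decide)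
      have hmem : ({0, 2} : Finset ℕ) ∈ Sa ↔ ({x, y} : Set V) ∈ S := by
        simp [hSa]
      have himg : f '' (↑({0, 2} : Finset ℕ) : Set ℕ) = {p, r} := by
        rw [show (↑({0, 2} : Finset ℕ) : Set ℕ) = {0, 2} by simp]
        rw [image_pair]
      rw [hmem, himg] at this
      exact this
    -- map {x,y} to {p,r}
    set h : V → V := fun z => if z = x then p else if z = y then r else z with hh
    have hhx : h x = p := if_pos rfl
    have hhy : h y = r := by simp [hh, hne]
    have hbij : Set.BijOn h {x, y} {p, r} := by
      refine ⟨?_, ?_, ?_⟩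
      · rintro z (rfl | rfl)
        · rw [hhx]; exact Or.inl rfl
        · rw [hhy]; exact Or.inr rfl
      · rintro a (rfl | rfl) b (rfl | rfl) hab
        · rfl
        · rw [hhx, hhy] at hab; exact absurd hab hpr.ne
        · rw [hhx, hhy] at hab; exact absurd hab.symm hpr.ne
        · rfl
      · rintro z (rfl | rfl)
        · exact ⟨x, Or.inl rfl, hhx⟩
        · exact ⟨y, Or.inr rfl, hhy⟩
    have hmono : StrictMonoOn h {x, y} := by
      rintro a (rfl | rfl) b (rfl | rfl) hab
      · exact absurd hab (lt_irrefl _)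
      · rw [hhx, hhy]; exact hpr
      · exact absurd (hab.trans hxy) (lt_irrefl _)
      · exact absurd hab (lt_irrefl _)
    have hiso : ∀ u : Set V, u ⊆ ({x, y} : Set V) → (u ∈ S ↔ h '' u ∈ S) := by
      intro u hu
      rcases subset_pair_iff_eq.mp hu with rfl | rfl | rfl | rfl
      · simp
      · rw [image_singleton, hhx]; simp [hSingle]
      · rw [image_singleton, hhy]; simp [hSingle]
      · rw [image_pair, hhx, hhy]; exact hpair
    obtain ⟨g, hg, -, hgW⟩ := hUltra {x, y} {p, r} (toFinite _) (toFinite _) h hbij hmono hiso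
    have hgx : g x = p := by rw [hgW x (Or.inl rfl), hhx]
    have hgy : g y = r := by rw [hgW y (Or.inr rfl), hhy]
    refine ⟨g.symm q, ?_, ?_⟩
    · rw [← hg.lt_iff_lt, hgx, g.apply_symm_apply]; exact hpq
    · rw [← hg.lt_iff_lt, hgy, g.apply_symm_apply]; exact hqr
  exact Order.iso_of_countable_dense V ℚ
end
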